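/- arXiv:2403.01492 — 6 statements merged into one kernel-verified Lean document; each statement's English description precedes it below -/
import Mathlib

section
/- Let G be a graph and e = uv an edge of G. Let G(u,w) be obtained from G − e by adding a new vertex w and the edge uw, and define G(v,w) similarly. Then the number of perfect matchings of the line graph of G satisfies M(L(G)) = M(L(G(u,w))) + M(L(G(v,w))). -/
open SimpleGraph

/-- The number of perfect matchings of a simple graph. -/
noncomputable def numPM {V : Type*} (G : SimpleGraph V) : ℕ :=
  Nat.card {M : G.Subgraph // M.IsPerfectMatching}

/-- `pendantSwap G x y u` is the graph obtained from `G - xy` by adding a new vertex `w`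
(the `Sum.inr` vertex) together with the edge `uw`. -/
def pendantSwap {V : Type*} (G : SimpleGraph V) (x y u : V) : SimpleGraph (V ⊕ Unit) :=
  SimpleGraph.fromEdgeSet
    ((Sym2.map Sum.inl '' (G.edgeSet \ {s(x, y)})) ∪ {s(Sum.inl u, Sum.inr ())})

namespace PendantSwapProof

open SimpleGraph

instance finiteSubgraph {W : Type*} [Finite W] (A : SimpleGraph W) : Finite A.Subgraph :=
  Finite.of_injective (fun M => (M.verts, M.Adj)) fun M N h => by
    rw [Prod.ext_iff] at h
    exact SimpleGraph.Subgraph.ext h.1 h.2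

/-- Transport a subgraph along an equivalence of vertex types, given that it preserves
the adjacencies actually used. -/
def transport {α β : Type*} {A : SimpleGraph α} {B : SimpleGraph β} (Φ : α ≃ β)
    (M : A.Subgraph) (hM : ∀ a b, M.Adj a b → B.Adj (Φ a) (Φ b)) : B.Subgraph where
  verts := Set.univ
  Adj a b := M.Adj (Φ.symm a) (Φ.symm b)
  adj_sub := fun {a b} h => by simpa using hM _ _ h
  edge_vert := fun _ => Set.mem_univ _
  symm := ⟨fun a b h => M.adj_symm h⟩

lemma transport_adj {α β : Type*} {A : SimpleGraph α} {B : SimpleGraph β} (Φ : α ≃ β)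
    (M : A.Subgraph) (hM : ∀ a b, M.Adj a b → B.Adj (Φ a) (Φ b)) (a b : β) :
    (transport Φ M hM).Adj a b ↔ M.Adj (Φ.symm a) (Φ.symm b) := Iff.rfl

lemma transport_isPM {α β : Type*} {A : SimpleGraph α} {B : SimpleGraph β} (Φ : α ≃ β)
    (M : A.Subgraph) (hM : ∀ a b, M.Adj a b → B.Adj (Φ a) (Φ b))
    (hPM : M.IsPerfectMatching) :
    (transport Φ M hM).IsPerfectMatching := by
  rw [Subgraph.isPerfectMatching_iff] at hPM ⊢
  intro b
  obtain ⟨w, hw, hu⟩ := hPM (Φ.symm b)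
  refine ⟨Φ w, ?_, fun c hc => ?_⟩
  · show M.Adj (Φ.symm b) (Φ.symm (Φ w))
    rwa [Equiv.symm_apply_apply]
  have h1 : Φ.symm c = w := hu _ hc
  rw [Equiv.symm_apply_eq] at h1
  exact h1

variable {V : Type*}

lemma edgeSet_ps (G : SimpleGraph V) (x y z : V) :
    (pendantSwap G x y z).edgeSet =
      (Sym2.map Sum.inl '' (G.edgeSet \ {s(x, y)})) ∪ {s(Sum.inl z, Sum.inr ())} := by
  ext g
  rw [pendantSwap, edgeSet_fromEdgeSet, Set.mem_diff]
  refine and_iff_left_of_imp fun hmem hdiag => ?_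
  rcases hmem with ⟨f, ⟨hf1, _⟩, rfl⟩ | h1
  · exact G.not_isDiag_of_mem_edgeSet hf1 ((Sym2.isDiag_map Sum.inl_injective).mp hdiag)
  · rw [Set.mem_singleton_iff] at h1
    subst h1
    simp at hdiag

open Classical in
/-- The natural bijection on edges. -/
noncomputable def phi (G : SimpleGraph V) (x y : V) (f : G.edgeSet) :
    (pendantSwap G x y x).edgeSet :=
  if hf : (f : Sym2 V) = s(x, y) then
    ⟨s(Sum.inl x, Sum.inr ()), by rw [edgeSet_ps]; exact Or.inr rfl⟩
  else
    ⟨Sym2.map Sum.inl f, by rw [edgeSet_ps]; exact Or.inl ⟨f, ⟨f.2, hf⟩, rfl⟩⟩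

lemma phi_val_of_eq (G : SimpleGraph V) (x y : V) (f : G.edgeSet)
    (hf : (f : Sym2 V) = s(x, y)) :
    (phi G x y f : Sym2 (V ⊕ Unit)) = s(Sum.inl x, Sum.inr ()) := by
  rw [phi, dif_pos hf]

lemma phi_val_of_ne (G : SimpleGraph V) (x y : V) (f : G.edgeSet)
    (hf : (f : Sym2 V) ≠ s(x, y)) :
    (phi G x y f : Sym2 (V ⊕ Unit)) = Sym2.map Sum.inl f := by
  rw [phi, dif_neg hf]

lemma inr_not_mem_map (f : Sym2 V) : Sum.inr () ∉ Sym2.map (Sum.inl : V → V ⊕ Unit) f := by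
  rw [Sym2.mem_map]
  rintro ⟨a, -, ha⟩
  exact Sum.inl_ne_inr ha

lemma phi_injective (G : SimpleGraph V) (x y : V) : Function.Injective (phi G x y) := by
  intro f g hfg
  have hval := congrArg Subtype.val hfg
  apply Subtype.ext
  by_cases hf : (f : Sym2 V) = s(x, y) <;> by_cases hg : (g : Sym2 V) = s(x, y)
  · rw [hf, hg]
  · rw [phi_val_of_eq G x y f hf, phi_val_of_ne G x y g hg] at hval
    exact absurd (hval ▸ (by simp : Sum.inr () ∈ s(Sum.inl x, Sum.inr ())))
      (inr_not_mem_map _)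
  · rw [phi_val_of_ne G x y f hf, phi_val_of_eq G x y g hg] at hval
    exact absurd (hval ▸ (inr_not_mem_map (f : Sym2 V)))
      (by simp)
  · rw [phi_val_of_ne G x y f hf, phi_val_of_ne G x y g hg] at hval
    exact Sym2.map.injective Sum.inl_injective hval

lemma phi_surjective (G : SimpleGraph V) {x y : V} (hxy : G.Adj x y) :
    Function.Surjective (phi G x y) := by
  intro g
  have hg : (g : Sym2 (V ⊕ Unit)) ∈
      (Sym2.map Sum.inl '' (G.edgeSet \ {s(x, y)})) ∪ {s(Sum.inl x, Sum.inr ())} := by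
    rw [← edgeSet_ps]
    exact g.2
  rcases hg with ⟨f, ⟨hf1, hf2⟩, hval⟩ | hgp
  · refine ⟨⟨f, hf1⟩, Subtype.ext ?_⟩
    rw [phi_val_of_ne G x y _ (by simpa using hf2)]
    exact hval
  · refine ⟨⟨s(x, y), hxy⟩, Subtype.ext ?_⟩
    rw [phi_val_of_eq G x y _ rfl]
    exact hgp.symm

/-- The bijection on edge sets. -/
noncomputable def PhiE (G : SimpleGraph V) {x y : V} (hxy : G.Adj x y) :
    G.edgeSet ≃ (pendantSwap G x y x).edgeSet :=
  Equiv.ofBijective (phi G x y) ⟨phi_injective G x y, phi_surjective G hxy⟩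

lemma PhiE_apply (G : SimpleGraph V) {x y : V} (hxy : G.Adj x y) (f : G.edgeSet) :
    PhiE G hxy f = phi G x y f := rfl

/-- Fact A: adjacency between non-deleted edges is preserved. -/
lemma adj_map (G : SimpleGraph V) {x y : V} (f g : G.edgeSet)
    (hf : (f : Sym2 V) ≠ s(x, y)) (hg : (g : Sym2 V) ≠ s(x, y)) :
    G.lineGraph.Adj f g ↔ (pendantSwap G x y x).lineGraph.Adj (phi G x y f) (phi G x y g) := by
  rw [lineGraph_adj_iff_exists, lineGraph_adj_iff_exists,
    phi_val_of_ne G x y f hf, phi_val_of_ne G x y g hg]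
  constructor
  · rintro ⟨hne, a, ha1, ha2⟩
    refine ⟨fun hEq => hne (phi_injective G x y hEq), Sum.inl a, ?_, ?_⟩ <;>
      rw [Sym2.mem_map]
    · exact ⟨a, ha1, rfl⟩
    · exact ⟨a, ha2, rfl⟩
  · rintro ⟨hne, b, hb1, hb2⟩
    rw [Sym2.mem_map] at hb1 hb2
    obtain ⟨a1, ha1, rfl⟩ := hb1
    obtain ⟨a2, ha2, ha⟩ := hb2
    refine ⟨fun hEq => hne (by rw [hEq]), a1, ha1, ?_⟩
    rwa [← Sum.inl_injective ha]

/-- Fact B: adjacency of the special edge with an edge through `x` corresponds to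
adjacency of the pendant edge. -/
lemma adj_pendant (G : SimpleGraph V) {x y : V} (hxy : G.Adj x y) (g : G.edgeSet)
    (hg : (g : Sym2 V) ≠ s(x, y)) :
    x ∈ (g : Sym2 V) ↔
      (pendantSwap G x y x).lineGraph.Adj (phi G x y ⟨s(x, y), hxy⟩) (phi G x y g) := by
  rw [lineGraph_adj_iff_exists, phi_val_of_eq G x y _ rfl, phi_val_of_ne G x y g hg]
  constructor
  · intro hx
    refine ⟨fun hEq => hg ?_, Sum.inl x, by simp, Sym2.mem_map.mpr ⟨x, hx, rfl⟩⟩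
    have := phi_injective G x y hEq
    rw [← this]
  · rintro ⟨hne, b, hb1, hb2⟩
    rw [Sym2.mem_map] at hb2
    obtain ⟨a, ha, rfl⟩ := hb2
    rw [Sym2.mem_iff] at hb1
    rcases hb1 with hb1 | hb1
    · rwa [← Sum.inl_injective hb1]
    · exact absurd hb1 Sum.inl_ne_inr

lemma fwd_pres (G : SimpleGraph V) {x y : V} (hxy : G.Adj x y)
    (M : G.lineGraph.Subgraph) (hPM : M.IsPerfectMatching)
    (hA : ∃ g, M.Adj ⟨s(x, y), hxy⟩ g ∧ x ∈ (g : Sym2 V)) :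
    ∀ f g, M.Adj f g →
      (pendantSwap G x y x).lineGraph.Adj (PhiE G hxy f) (PhiE G hxy g) := by
  have key : ∀ f g, M.Adj f g → (f : Sym2 V) = s(x, y) →
      (pendantSwap G x y x).lineGraph.Adj (PhiE G hxy f) (PhiE G hxy g) := by
    intro f g hfg hf
    have hfe : f = ⟨s(x, y), hxy⟩ := Subtype.ext hf
    subst hfe
    obtain ⟨g', hg', hxg'⟩ := hA
    obtain ⟨w, hw, hu⟩ := Subgraph.isPerfectMatching_iff.mp hPM ⟨s(x, y), hxy⟩
    have hgg' : g = g' := (hu g hfg).trans (hu g' hg').symm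
    have hxg : x ∈ (g : Sym2 V) := hgg' ▸ hxg'
    have hgne : (g : Sym2 V) ≠ s(x, y) := by
      intro hEq
      exact (M.adj_sub hfg).ne (Subtype.ext hEq.symm)
    exact (adj_pendant G hxy g hgne).mp hxg
  intro f g hfg
  by_cases hf : (f : Sym2 V) = s(x, y)
  · exact key f g hfg hf
  by_cases hg : (g : Sym2 V) = s(x, y)
  · exact (key g f (M.adj_symm hfg) hg).symm
  · exact (adj_map G f g hf hg).mp (M.adj_sub hfg)

lemma bwd_pres (G : SimpleGraph V) {x y : V} (hxy : G.Adj x y)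
    (M' : (pendantSwap G x y x).lineGraph.Subgraph) :
    ∀ a b, M'.Adj a b →
      G.lineGraph.Adj ((PhiE G hxy).symm a) ((PhiE G hxy).symm b) := by
  intro a b hab
  set f := (PhiE G hxy).symm a with hfdef
  set g := (PhiE G hxy).symm b with hgdef
  have hAdj : (pendantSwap G x y x).lineGraph.Adj (PhiE G hxy f) (PhiE G hxy g) := by
    rw [hfdef, hgdef, Equiv.apply_symm_apply, Equiv.apply_symm_apply]
    exact M'.adj_sub hab
  by_cases hf : (f : Sym2 V) = s(x, y) <;> by_cases hg : (g : Sym2 V) = s(x, y)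
  · have : f = g := Subtype.ext (hf.trans hg.symm)
    rw [this] at hAdj
    exact absurd rfl hAdj.ne
  · have hfe : f = ⟨s(x, y), hxy⟩ := Subtype.ext hf
    rw [hfe] at hAdj ⊢
    have hxg : x ∈ (g : Sym2 V) := (adj_pendant G hxy g hg).mpr hAdj
    refine lineGraph_adj_iff_exists.mpr ⟨fun hEq => hg (by rw [← hEq]), x, by simp, hxg⟩
  · have hge : g = ⟨s(x, y), hxy⟩ := Subtype.ext hg
    rw [hge] at hAdj ⊢
    have hxf : x ∈ (f : Sym2 V) := (adj_pendant G hxy f hf).mpr hAdj.symm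
    exact (lineGraph_adj_iff_exists.mpr ⟨fun hEq => hf (by rw [← hEq]), x, by simp, hxf⟩).symm
  · exact (adj_map G f g hf hg).mpr hAdj

lemma classA_of_bwd (G : SimpleGraph V) {x y : V} (hxy : G.Adj x y)
    (M' : (pendantSwap G x y x).lineGraph.Subgraph) (hPM : M'.IsPerfectMatching) :
    ∃ g, (transport (PhiE G hxy).symm M' (bwd_pres G hxy M')).Adj ⟨s(x, y), hxy⟩ g ∧
      x ∈ (g : Sym2 V) := by
  obtain ⟨b, hb, -⟩ := Subgraph.isPerfectMatching_iff.mp hPM (PhiE G hxy ⟨s(x, y), hxy⟩)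
  set g := (PhiE G hxy).symm b with hgdef
  have hbg : b = PhiE G hxy g := by rw [hgdef, Equiv.apply_symm_apply]
  have hAdj : (pendantSwap G x y x).lineGraph.Adj (PhiE G hxy ⟨s(x, y), hxy⟩) (PhiE G hxy g) := by
    rw [← hbg]; exact M'.adj_sub hb
  have hgne : (g : Sym2 V) ≠ s(x, y) := by
    intro hEq
    have : g = ⟨s(x, y), hxy⟩ := Subtype.ext hEq
    rw [this] at hAdj
    exact absurd rfl hAdj.ne
  refine ⟨g, ?_, (adj_pendant G hxy g hgne).mpr hAdj⟩
  rw [transport_adj, Equiv.symm_symm, ← hbg]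
  exact hb

lemma card_classA (G : SimpleGraph V) {x y : V} (hxy : G.Adj x y) :
    Nat.card {M : G.lineGraph.Subgraph // M.IsPerfectMatching ∧
        ∃ g, M.Adj ⟨s(x, y), hxy⟩ g ∧ x ∈ (g : Sym2 V)} =
      numPM (pendantSwap G x y x).lineGraph := by
  rw [numPM]
  refine Nat.card_congr
    ⟨fun M => ⟨transport (PhiE G hxy) M.1 (fwd_pres G hxy M.1 M.2.1 M.2.2),
        transport_isPM _ _ _ M.2.1⟩,
      fun M' => ⟨transport (PhiE G hxy).symm M'.1 (bwd_pres G hxy M'.1),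
        transport_isPM _ _ _ M'.2, classA_of_bwd G hxy M'.1 M'.2⟩, ?_, ?_⟩
  · rintro ⟨M, hM, hA⟩
    apply Subtype.ext
    apply SimpleGraph.Subgraph.ext
    · exact (Subgraph.isSpanning_iff.mp hM.2).symm
    · ext a b
      simp [transport]
  · rintro ⟨M', hM'⟩
    apply Subtype.ext
    apply SimpleGraph.Subgraph.ext
    · exact (Subgraph.isSpanning_iff.mp hM'.2).symm
    · ext a b
      simp [transport]

lemma card_split {α : Type*} [Finite α] (p q : α → Prop) :
    Nat.card {a // p a} = Nat.card {a // p a ∧ q a} + Nat.card {a // p a ∧ ¬q a} := by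
  classical
  rw [← Nat.card_congr (Equiv.subtypeSubtypeEquivSubtypeInter p q),
    ← Nat.card_congr (Equiv.subtypeSubtypeEquivSubtypeInter p (fun a => ¬q a)),
    ← Nat.card_sum]
  exact Nat.card_congr (Equiv.sumCompl fun x : {a // p a} => q x.1).symm

end PendantSwapProof

open PendantSwapProof in
theorem stmt_9 {V : Type*} [Fintype V] (G : SimpleGraph V) {u v : V} (h : G.Adj u v) :
    numPM G.lineGraph =
      numPM (pendantSwap G u v u).lineGraph + numPM (pendantSwap G u v v).lineGraph := by
  classical
  have hswap : pendantSwap G u v v = pendantSwap G v u v := by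
    unfold pendantSwap
    have : s(u, v) = s(v, u) := Sym2.eq_swap
    rw [this]
  rw [hswap, ← card_classA G h, ← card_classA G h.symm, numPM,
    card_split (q := fun M : G.lineGraph.Subgraph =>
      ∃ g, M.Adj ⟨s(u, v), h⟩ g ∧ u ∈ (g : Sym2 V))]
  congr 1
  refine Nat.card_congr (Equiv.subtypeEquivRight ?_)
  intro M
  have hee : (⟨s(v, u), h.symm⟩ : G.edgeSet) = ⟨s(u, v), h⟩ := Subtype.ext Sym2.eq_swap
  rw [hee]
  constructor
  · rintro ⟨hPM, hnq⟩
    refine ⟨hPM, ?_⟩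
    obtain ⟨w, hw, hu⟩ := SimpleGraph.Subgraph.isPerfectMatching_iff.mp hPM ⟨s(u, v), h⟩
    obtain ⟨hne, a, ha1, ha2⟩ := SimpleGraph.lineGraph_adj_iff_exists.mp (M.adj_sub hw)
    rw [Sym2.mem_iff] at ha1
    rcases ha1 with rfl | rfl
    · exact absurd ⟨w, hw, ha2⟩ hnq
    · exact ⟨w, hw, ha2⟩
  · rintro ⟨hPM, g2, hg2, hv2⟩
    refine ⟨hPM, ?_⟩
    rintro ⟨g1, hg1, hu1⟩
    obtain ⟨w, hw, hu⟩ := SimpleGraph.Subgraph.isPerfectMatching_iff.mp hPM ⟨s(u, v), h⟩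
    have h12 : g1 = g2 := (hu g1 hg1).trans (hu g2 hg2).symm
    rw [h12] at hu1
    have : (g2 : Sym2 V) = s(u, v) := (Sym2.mem_and_mem_iff h.ne).mp ⟨hu1, hv2⟩
    exact (M.adj_sub hg2).ne (Subtype.ext this).symm
end

section
/- If T is a tree with an even number of edges, then the number of perfect matchings of its line graph L(T) is odd. -/
open SimpleGraph Finset Matrix

section Aux

variable {W : Type*}


/-- Perfect matchings of `G` correspond to involutive permutations moving every
vertex to an adjacent one. -/
noncomputable def pmEquivInvol (G : SimpleGraph W) :
    {M : G.Subgraph // M.IsPerfectMatching} ≃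
      {σ : Equiv.Perm W // (∀ w, G.Adj w (σ w)) ∧ ∀ w, σ (σ w) = w} where
  toFun := fun ⟨M, hM⟩ => by
    have h : ∀ v, ∃! w, M.Adj v w := (SimpleGraph.Subgraph.isPerfectMatching_iff).mp hM
    refine ⟨⟨fun v => (h v).choose, fun v => (h v).choose, ?_, ?_⟩, ?_, ?_⟩
    · intro v
      exact ((h ((h v).choose)).choose_spec.2 v ((h v).choose_spec.1.symm)).symm
    · intro v
      exact ((h ((h v).choose)).choose_spec.2 v ((h v).choose_spec.1.symm)).symm
    · intro w
      exact M.adj_sub (h w).choose_spec.1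
    · intro w
      exact ((h ((h w).choose)).choose_spec.2 w ((h w).choose_spec.1.symm)).symm
  invFun := fun ⟨σ, hσ⟩ =>
    ⟨{ verts := Set.univ
       Adj := fun a b => σ a = b
       adj_sub := by rintro a b rfl; exact hσ.1 a
       edge_vert := by intro a b _; trivial
       symm := ⟨by rintro a b rfl; exact (hσ.2 a)⟩ },
     (SimpleGraph.Subgraph.isPerfectMatching_iff).mpr
       (fun v => ⟨σ v, rfl, fun y hy => Eq.symm hy⟩)⟩
  left_inv := by
    rintro ⟨M, hM⟩
    have h : ∀ v, ∃! w, M.Adj v w := (SimpleGraph.Subgraph.isPerfectMatching_iff).mp hM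
    apply Subtype.ext
    apply SimpleGraph.Subgraph.ext
    · exact (Set.eq_univ_of_forall hM.2).symm
    · ext a b
      constructor
      · rintro rfl; exact (h a).choose_spec.1
      · intro hab; exact ((h a).choose_spec.2 b hab).symm
  right_inv := by
    rintro ⟨σ, hσ⟩
    apply Subtype.ext
    apply Equiv.ext
    intro v
    have h : ∀ x, ∃! w, σ x = w := fun x => ⟨σ x, rfl, fun y hy => hy.symm⟩
    exact ((h v).choose_spec.1).symm


lemma numPM_cast_eq_det {W : Type*} [Fintype W] (G : SimpleGraph W)
    [DecidableEq W] [DecidableRel G.Adj] :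
    ((Nat.card {M : G.Subgraph // M.IsPerfectMatching} : ZMod 2)) =
      (G.adjMatrix (ZMod 2)).det := by
  classical
  -- rewrite the determinant as a sum of indicators
  have hsign : ∀ σ : Equiv.Perm W, ((Equiv.Perm.sign σ : ℤ) : ZMod 2) = 1 := by
    intro σ
    rcases Int.units_eq_one_or (Equiv.Perm.sign σ) with h | h <;> rw [h] <;> decide
  have hdet : (G.adjMatrix (ZMod 2)).det =
      ∑ σ : Equiv.Perm W, if ∀ i, G.Adj (σ i) i then (1 : ZMod 2) else 0 := by
    rw [Matrix.det_apply]
    refine Finset.sum_congr rfl fun σ _ => ?_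
    rw [Units.smul_def, zsmul_eq_mul, hsign σ, one_mul]
    simp only [SimpleGraph.adjMatrix_apply]
    rw [Fintype.prod_boole]
  -- the predicate
  set P : Equiv.Perm W → Prop := fun σ => ∀ i, G.Adj (σ i) i with hP
  set I : Equiv.Perm W → Prop := fun σ => ∀ i, σ (σ i) = i with hI
  have hsplit : (∑ σ : Equiv.Perm W, if P σ then (1 : ZMod 2) else 0) =
      (∑ σ ∈ univ.filter (fun σ => P σ ∧ I σ), (1 : ZMod 2))
      + ∑ σ ∈ univ.filter (fun σ => P σ ∧ ¬ I σ), (1 : ZMod 2) := by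
    rw [show (∑ σ : Equiv.Perm W, if P σ then (1 : ZMod 2) else 0)
        = ∑ σ ∈ univ.filter P, (1 : ZMod 2) from (Finset.sum_filter P _).symm,
      ← Finset.sum_filter_add_sum_filter_not (univ.filter P) I]
    congr 1 <;> · apply Finset.sum_congr _ (fun _ _ => rfl); ext σ; simp [and_comm]
  have hzero : (∑ σ ∈ univ.filter (fun σ => P σ ∧ ¬ I σ), (1 : ZMod 2)) = 0 := by
    refine Finset.sum_involution (fun σ _ => σ⁻¹) ?_ ?_ ?_ ?_
    · intro σ hσ; decide
    · intro σ hσ _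
      simp only [mem_filter, mem_univ, true_and] at hσ
      intro hc
      apply hσ.2
      intro i
      have := congrArg (fun τ : Equiv.Perm W => τ (σ i)) hc
      simpa using this.symm
    · intro σ hσ
      simp only [mem_filter, mem_univ, true_and] at hσ ⊢
      constructor
      · intro i
        have := G.adj_symm (hσ.1 (σ⁻¹ i))
        simpa using this
      · intro hc
        apply hσ.2
        intro i
        simpa using (hc (σ (σ i))).symm
    · intro σ hσ; simp
  rw [hdet, hsplit, hzero, add_zero]
  have hsets : univ.filter (fun σ => P σ ∧ I σ) =
      univ.filter (fun σ : Equiv.Perm W =>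
        (∀ w, G.Adj w (σ w)) ∧ ∀ w, σ (σ w) = w) := by
    ext σ
    simp only [mem_filter, mem_univ, true_and, hP, hI]
    exact ⟨fun ⟨h1, h2⟩ => ⟨fun w => G.adj_symm (h1 w), h2⟩,
      fun ⟨h1, h2⟩ => ⟨fun w => G.adj_symm (h1 w), h2⟩⟩
  rw [hsets, Nat.card_congr (pmEquivInvol G), Nat.card_eq_fintype_card,
    Fintype.card_subtype, Finset.sum_const, nsmul_eq_mul, mul_one]

end Aux

section Aux2

variable {V : Type*} [Fintype V] [DecidableEq V]

lemma edge_card_two (T : SimpleGraph V) {e : Sym2 V} (he : e ∈ T.edgeSet) :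
    (univ.filter (fun v => v ∈ e)).card = 2 := by
  induction e with
  | _ a b =>
    have hab : a ≠ b := (T.mem_edgeSet.mp he).ne
    have : univ.filter (fun v => v ∈ s(a, b)) = {a, b} := by
      ext v; simp [Sym2.mem_iff]
    rw [this, Finset.card_pair hab]

lemma edge_sum_zero (T : SimpleGraph V) {e : Sym2 V} (he : e ∈ T.edgeSet) :
    (∑ v : V, if v ∈ e then (1 : ZMod 2) else 0) = 0 := by
  rw [Finset.sum_boole, edge_card_two T he]
  decide

lemma edge_pair_sum (T : SimpleGraph V) [DecidableRel T.lineGraph.Adj]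
    (e f : T.edgeSet) :
    (∑ v : V, (if v ∈ (e : Sym2 V) then (1 : ZMod 2) else 0) *
      (if v ∈ (f : Sym2 V) then (1 : ZMod 2) else 0)) =
      (T.lineGraph).adjMatrix (ZMod 2) e f := by
  classical
  have hterm : ∀ v : V, (if v ∈ (e : Sym2 V) then (1 : ZMod 2) else 0) *
      (if v ∈ (f : Sym2 V) then (1 : ZMod 2) else 0) =
      if v ∈ (e : Sym2 V) ∧ v ∈ (f : Sym2 V) then 1 else 0 := by
    intro v; by_cases h1 : v ∈ (e : Sym2 V) <;> by_cases h2 : v ∈ (f : Sym2 V) <;>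
      simp [h1, h2]
  simp_rw [hterm]
  rw [Finset.sum_boole]
  rw [SimpleGraph.adjMatrix_apply]
  by_cases hef : e = f
  · subst hef
    have : (univ.filter (fun v => v ∈ (e : Sym2 V) ∧ v ∈ (e : Sym2 V))).card = 2 := by
      simp only [and_self]
      exact edge_card_two T e.2
    rw [this, if_neg (T.lineGraph.irrefl)]
    decide
  · by_cases hadj : (T.lineGraph).Adj e f
    · obtain ⟨-, v₀, hv₀e, hv₀f⟩ := lineGraph_adj_iff_exists.mp hadj
      have : (univ.filter (fun v => v ∈ (e : Sym2 V) ∧ v ∈ (f : Sym2 V))) = {v₀} := by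
        ext v
        simp only [mem_filter, mem_univ, true_and, mem_singleton]
        constructor
        · rintro ⟨h1, h2⟩
          by_contra hne
          exact hef (Subtype.ext (Sym2.eq_of_ne_mem hne h1 hv₀e h2 hv₀f))
        · rintro rfl; exact ⟨hv₀e, hv₀f⟩
      rw [this, if_pos hadj, Finset.card_singleton, Nat.cast_one]
    · have : (univ.filter (fun v => v ∈ (e : Sym2 V) ∧ v ∈ (f : Sym2 V))) = ∅ := by
        ext v
        simp only [mem_filter, mem_univ, true_and, Finset.notMem_empty, iff_false, not_and]
        intro h1 h2
        exact hadj (lineGraph_adj_iff_exists.mpr ⟨fun h => hef h, v, h1, h2⟩)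
      rw [this, if_neg hadj, Finset.card_empty, Nat.cast_zero]

lemma det_lineGraph_adj (T : SimpleGraph V) [Fintype T.edgeSet] [DecidableRel T.lineGraph.Adj]
    (hT : T.IsTree) (heven : Even (Fintype.card T.edgeSet)) :
    ((T.lineGraph).adjMatrix (ZMod 2)).det = 1 := by
  classical
  have hm : Fintype.card T.edgeSet + 1 = Fintype.card V := by
    have h := hT.card_edgeFinset
    rwa [SimpleGraph.edgeFinset_card] at h
  have hcard : Fintype.card (T.edgeSet ⊕ Unit) = Fintype.card V := by
    simp only [Fintype.card_sum, Fintype.card_unit]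
    exact hm
  set κ : (T.edgeSet ⊕ Unit) ≃ V := Fintype.equivOfCardEq hcard with hκ
  set Bm : Matrix V (T.edgeSet ⊕ Unit) (ZMod 2) := fun v i =>
    Sum.elim (fun e : T.edgeSet => if v ∈ (e : Sym2 V) then (1 : ZMod 2) else 0)
      (fun _ => 1) i with hBm
  set N : Matrix (T.edgeSet ⊕ Unit) (T.edgeSet ⊕ Unit) (ZMod 2) :=
    Bm.submatrix κ id with hN
  have hcardV : ((Fintype.card V : ZMod 2)) = 1 := by
    rw [← hm]
    obtain ⟨k, hk⟩ := heven
    rw [hk]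
    push_cast
    ring_nf
    rw [show ((2 : ZMod 2)) = 0 by decide]
    ring
  have hsum : ∀ i j, (Nᵀ * N) i j = ∑ v : V, Bm v i * Bm v j := by
    intro i j
    rw [Matrix.mul_apply]
    rw [← Equiv.sum_comp κ (fun v => Bm v i * Bm v j)]
    rfl
  have hNtN : Nᵀ * N =
      Matrix.fromBlocks ((T.lineGraph).adjMatrix (ZMod 2)) 0 0 1 := by
    ext i j
    rw [hsum i j]
    match i, j with
    | Sum.inl e, Sum.inl f =>
      simp only [hBm, Sum.elim_inl, Matrix.fromBlocks_apply₁₁]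
      exact edge_pair_sum T e f
    | Sum.inl e, Sum.inr u =>
      simp only [hBm, Sum.elim_inl, Sum.elim_inr, mul_one, Matrix.fromBlocks_apply₁₂,
        Matrix.zero_apply]
      exact edge_sum_zero T e.2
    | Sum.inr u, Sum.inl f =>
      simp only [hBm, Sum.elim_inl, Sum.elim_inr, one_mul, Matrix.fromBlocks_apply₂₁,
        Matrix.zero_apply]
      exact edge_sum_zero T f.2
    | Sum.inr u, Sum.inr u' =>
      simpa [hBm, Finset.card_univ, Matrix.one_apply] using hcardV
  have hx2 : ∀ x : ZMod 2, x * x = x := by decide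
  have hdetA : ((T.lineGraph).adjMatrix (ZMod 2)).det = N.det := by
    have h1 : ((T.lineGraph).adjMatrix (ZMod 2)).det =
        (Matrix.fromBlocks ((T.lineGraph).adjMatrix (ZMod 2)) 0 0
          (1 : Matrix Unit Unit (ZMod 2))).det := by
      rw [Matrix.det_fromBlocks_zero₂₁, Matrix.det_one, mul_one]
    rw [h1, ← hNtN, Matrix.det_mul, Matrix.det_transpose, hx2]
  rw [hdetA]
  have hN0 : N.det ≠ 0 := by
    intro h0
    obtain ⟨x, hx0, hx⟩ := Matrix.exists_mulVec_eq_zero_iff.mpr h0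
    -- the basic linear relations, one for each vertex
    have hv : ∀ v : V,
        (∑ e : T.edgeSet, (if v ∈ (e : Sym2 V) then (1 : ZMod 2) else 0) * x (Sum.inl e))
          + x (Sum.inr ()) = 0 := by
      intro v
      have h := congrFun hx (κ.symm v)
      simp only [Matrix.mulVec, dotProduct, hN, Matrix.submatrix_apply, id_eq,
        Equiv.apply_symm_apply, Pi.zero_apply] at h
      rw [Fintype.sum_sum_type] at h
      simpa [hBm] using h
    -- step 1 : the `Unit` coordinate vanishes
    have hinr : x (Sum.inr ()) = 0 := by
      have h1 : ∑ v : V,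
          ((∑ e : T.edgeSet, (if v ∈ (e : Sym2 V) then (1 : ZMod 2) else 0) * x (Sum.inl e))
            + x (Sum.inr ())) = 0 := Finset.sum_eq_zero fun v _ => hv v
      rw [Finset.sum_add_distrib, Finset.sum_comm] at h1
      have h2 : ∀ e : T.edgeSet,
          (∑ v : V, (if v ∈ (e : Sym2 V) then (1 : ZMod 2) else 0) * x (Sum.inl e)) = 0 := by
        intro e
        rw [← Finset.sum_mul, edge_sum_zero T e.2, zero_mul]
      rw [Finset.sum_congr rfl (fun e _ => h2 e), Finset.sum_const, Finset.sum_const,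
        smul_zero, zero_add, nsmul_eq_mul] at h1
      rwa [Finset.card_univ, hcardV, one_mul] at h1
    -- step 2 : each edge coordinate vanishes
    have hinl : ∀ e₀ : T.edgeSet, x (Sum.inl e₀) = 0 := by
      rintro ⟨ev, he⟩
      induction ev with
      | _ a b =>
        have hadj : T.Adj a b := T.mem_edgeSet.mp he
        set T' := T \ fromEdgeSet {s(a, b)} with hT'
        have hbridge : ¬ T'.Reachable a b :=
          ((isAcyclic_iff_forall_adj_isBridge.mp hT.IsAcyclic) hadj)
        set C : Finset V := univ.filter (fun v => T'.Reachable a v) with hC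
        have haC : a ∈ C := by
          simp only [hC, Finset.mem_filter, Finset.mem_univ, true_and]
          exact Reachable.refl a
        have hbC : b ∉ C := by simp [hC]; exact hbridge
        -- the cut functional evaluated at each edge
        have key : ∀ e : T.edgeSet,
            ((C.filter (fun v => v ∈ (e : Sym2 V))).card : ZMod 2)
              = if (e : Sym2 V) = s(a, b) then 1 else 0 := by
          rintro ⟨fv, hf⟩
          by_cases hfe : fv = s(a, b)
          · subst hfe
            rw [if_pos rfl]
            have : C.filter (fun v => v ∈ s(a, b)) = {a} := by
              ext v
              simp only [Finset.mem_filter, Finset.mem_singleton, Sym2.mem_iff]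
              constructor
              · rintro ⟨hvC, rfl | rfl⟩
                · rfl
                · exact absurd hvC hbC
              · rintro rfl; exact ⟨haC, Or.inl rfl⟩
            rw [this, Finset.card_singleton, Nat.cast_one]
          · rw [if_neg hfe]
            induction fv with
            | _ c d =>
              have hcd : T.Adj c d := T.mem_edgeSet.mp hf
              have hT'cd : T'.Adj c d := by
                rw [hT', SimpleGraph.sdiff_adj]
                refine ⟨hcd, ?_⟩
                rw [SimpleGraph.fromEdgeSet_adj]
                rintro ⟨hmem, -⟩
                exact hfe (by simpa using hmem)
              have hreach : T'.Reachable c d := hT'cd.reachable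
              by_cases hc : T'.Reachable a c
              · have hd : T'.Reachable a d := hc.trans hreach
                have : C.filter (fun v => v ∈ s(c, d)) = {c, d} := by
                  ext v
                  simp only [Finset.mem_filter, Finset.mem_insert, Finset.mem_singleton,
                    Sym2.mem_iff, hC, Finset.mem_univ, true_and]
                  constructor
                  · rintro ⟨-, h⟩; exact h
                  · rintro (rfl | rfl)
                    · exact ⟨hc, Or.inl rfl⟩
                    · exact ⟨hd, Or.inr rfl⟩
                rw [this, Finset.card_pair hcd.ne]
                decide
              · have hdn : ¬ T'.Reachable a d := fun hd => hc (hd.trans hreach.symm)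
                have : C.filter (fun v => v ∈ s(c, d)) = ∅ := by
                  ext v
                  simp only [Finset.mem_filter, Finset.notMem_empty, iff_false, not_and,
                    Sym2.mem_iff, hC, Finset.mem_univ, true_and]
                  rintro hvC (rfl | rfl)
                  · exact hc hvC
                  · exact hdn hvC
                rw [this, Finset.card_empty, Nat.cast_zero]
        -- sum the relations over `C`
        have h3 : ∑ v ∈ C,
            ((∑ e : T.edgeSet, (if v ∈ (e : Sym2 V) then (1 : ZMod 2) else 0) * x (Sum.inl e))
              + x (Sum.inr ())) = 0 := Finset.sum_eq_zero fun v _ => hv v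
        rw [Finset.sum_add_distrib, Finset.sum_const, hinr, smul_zero, add_zero,
          Finset.sum_comm] at h3
        have h4 : ∀ e : T.edgeSet,
            (∑ v ∈ C, (if v ∈ (e : Sym2 V) then (1 : ZMod 2) else 0) * x (Sum.inl e))
              = (if e = (⟨s(a, b), he⟩ : T.edgeSet) then x (Sum.inl e) else 0) := by
          intro e
          rw [← Finset.sum_mul, Finset.sum_boole, key e]
          by_cases hh : (e : Sym2 V) = s(a, b)
          · rw [if_pos hh, one_mul, if_pos (Subtype.ext hh)]
          · rw [if_neg hh, zero_mul, if_neg (fun hc => hh (by rw [hc]))]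
        rw [Finset.sum_congr rfl (fun e _ => h4 e), Finset.sum_ite_eq' univ
          (⟨s(a, b), he⟩ : T.edgeSet) (fun e => x (Sum.inl e))] at h3
        simpa using h3
    apply hx0
    funext i
    match i with
    | Sum.inl e => exact hinl e
    | Sum.inr () => exact hinr
  have hone : ∀ x : ZMod 2, x ≠ 0 → x = 1 := by decide
  exact hone _ hN0

end Aux2

theorem stmt_11 {V : Type*} [Fintype V] (T : SimpleGraph V) (hT : T.IsTree)
    (heven : Even T.edgeSet.ncard) :
    Odd (numPM T.lineGraph) := by
  classical
  haveI : Fintype T.edgeSet := Set.Finite.fintype (Set.toFinite _)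
  haveI : DecidableRel T.lineGraph.Adj := Classical.decRel _
  have heven' : Even (Fintype.card T.edgeSet) := by
    rwa [← Nat.card_eq_fintype_card, Nat.card_coe_set_eq]
  have h1 := numPM_cast_eq_det T.lineGraph
  have h2 := det_lineGraph_adj T hT heven'
  have hcast : ((numPM T.lineGraph : ZMod 2)) = 1 := by
    rw [numPM, h1, h2]
  have hodd : ∀ n : ℕ, ((n : ZMod 2)) = 1 → Odd n := by
    intro n h
    rcases Nat.even_or_odd n with he | ho
    · exfalso
      obtain ⟨k, hk⟩ := he
      rw [hk] at h
      push_cast at h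
      rw [← two_mul, show ((2 : ZMod 2)) = 0 by decide, zero_mul] at h
      exact absurd h (by decide)
    · exact ho
  exact hodd _ hcast
end

section
/- Suppose G is obtained from a graph G' by adding one new vertex v and one new edge e = uv, where u is a vertex of G'. If G' is (2,2)-choosable, then G is (2,2)-choosable. -/
open SimpleGraph

/-- `G` is total weight `(k, k')`-choosable: for every assignment of a `k`-element list of
reals to each vertex and a `k'`-element list to each edge, there is a choice of weights
from the lists such that adjacent vertices get distinct total weights (vertex weight plus
the sum of the weights of incident edges). -/
def TWChoosable {V : Type*} (G : SimpleGraph V) (k k' : ℕ) : Prop :=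
  ∀ (Lv : V → Finset ℝ) (Le : Sym2 V → Finset ℝ),
    (∀ v, (Lv v).card = k) → (∀ e ∈ G.edgeSet, (Le e).card = k') →
    ∃ (fv : V → ℝ) (fe : Sym2 V → ℝ),
      (∀ v, fv v ∈ Lv v) ∧ (∀ e ∈ G.edgeSet, fe e ∈ Le e) ∧
      ∀ u v, G.Adj u v →
        fv u + ∑ᶠ e ∈ G.incidenceSet u, fe e ≠ fv v + ∑ᶠ e ∈ G.incidenceSet v, fe e

/-- The graph obtained from `G'` by adding one new vertex (the `Sum.inr` vertex)
and one new edge joining it to the vertex `u` of `G'`. -/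
def addPendant {V : Type*} (G' : SimpleGraph V) (u : V) : SimpleGraph (V ⊕ Unit) :=
  SimpleGraph.fromEdgeSet ((Sym2.map Sum.inl '' G'.edgeSet) ∪ {s(Sum.inl u, Sum.inr ())})

lemma sym2_inl_inj {V : Type*} :
    Function.Injective (Sym2.map (Sum.inl : V → V ⊕ Unit)) :=
  Sym2.map.injective Sum.inl_injective

lemma addPendant_edgeSet {V : Type*} (G' : SimpleGraph V) (u : V) :
    (addPendant G' u).edgeSet =
      (Sym2.map Sum.inl '' G'.edgeSet) ∪ {s(Sum.inl u, Sum.inr ())} := by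
  rw [addPendant, edgeSet_fromEdgeSet]
  ext e
  simp only [Set.mem_diff, Set.mem_setOf_eq]
  refine ⟨fun h => h.1, fun he => ⟨he, ?_⟩⟩
  rcases he with ⟨t, ht, rfl⟩ | rfl
  · exact fun hd => G'.not_isDiag_of_mem_edgeSet ht ((Sym2.isDiag_map Sum.inl_injective).mp hd)
  · simp [Sym2.isDiag_iff_proj_eq]

lemma pend_notMem_image {V : Type*} (u : V) (S : Set (Sym2 V)) :
    s(Sum.inl u, Sum.inr ()) ∉ (Sym2.map (Sum.inl : V → V ⊕ Unit)) '' S := by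
  rintro ⟨t, -, ht⟩
  have : (Sum.inr () : V ⊕ Unit) ∈ Sym2.map (Sum.inl : V → V ⊕ Unit) t := by
    rw [ht]; simp
  rw [Sym2.mem_map] at this
  obtain ⟨x, -, hx⟩ := this
  exact Sum.inl_ne_inr hx

lemma addPendant_incidenceSet_inl {V : Type*} [DecidableEq V] (G' : SimpleGraph V) (u w : V) :
    (addPendant G' u).incidenceSet (Sum.inl w) =
      (Sym2.map Sum.inl '' G'.incidenceSet w) ∪
        (if w = u then {s(Sum.inl u, Sum.inr ())} else ∅) := by
  ext e
  simp only [incidenceSet, Set.mem_sep_iff, addPendant_edgeSet, Set.mem_union,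
    Set.mem_image, Set.mem_singleton_iff]
  constructor
  · rintro ⟨⟨t, ht, rfl⟩ | rfl, hm⟩
    · left
      refine ⟨t, ⟨ht, ?_⟩, rfl⟩
      obtain ⟨x, hx, hxe⟩ := Sym2.mem_map.mp hm
      rwa [← Sum.inl_injective hxe]
    · right
      have h1 : (Sum.inl w : V ⊕ Unit) = Sum.inl u ∨ (Sum.inl w : V ⊕ Unit) = Sum.inr () :=
        Sym2.mem_iff.mp hm
      rcases h1 with h1 | h1
      · rw [if_pos (Sum.inl_injective h1)]; exact Set.mem_singleton _
      · exact absurd h1 Sum.inl_ne_inr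
  · rintro (⟨t, ⟨ht, hm⟩, rfl⟩ | he)
    · exact ⟨Or.inl ⟨t, ht, rfl⟩, Sym2.mem_map.mpr ⟨w, hm, rfl⟩⟩
    · by_cases hw : w = u
      · rw [if_pos hw] at he
        rw [Set.mem_singleton_iff] at he
        subst he
        refine ⟨Or.inr rfl, ?_⟩
        rw [hw]
        simp
      · rw [if_neg hw] at he
        exact absurd he (Set.notMem_empty _)

lemma addPendant_incidenceSet_inr {V : Type*} (G' : SimpleGraph V) (u : V) :
    (addPendant G' u).incidenceSet (Sum.inr ()) = {s(Sum.inl u, Sum.inr ())} := by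
  ext e
  simp only [incidenceSet, Set.mem_sep_iff, addPendant_edgeSet, Set.mem_union,
    Set.mem_singleton_iff]
  constructor
  · rintro ⟨⟨t, ht, rfl⟩ | rfl, hm⟩
    · obtain ⟨x, -, hx⟩ := Sym2.mem_map.mp hm
      exact absurd hx Sum.inl_ne_inr
    · rfl
  · rintro rfl
    exact ⟨Or.inr rfl, by simp⟩

theorem stmt_15 {V : Type*} [Fintype V] (G' : SimpleGraph V) (u : V)
    (h : TWChoosable G' 2 2) :
    TWChoosable (addPendant G' u) 2 2 := by
  classical
  intro Lv Le hLv hLe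
  set pend : Sym2 (V ⊕ Unit) := s(Sum.inl u, Sum.inr ()) with hpend_def
  have hpend_edge : pend ∈ (addPendant G' u).edgeSet := by
    rw [addPendant_edgeSet]; exact Or.inr rfl
  have hLepend : (Le pend).card = 2 := hLe pend hpend_edge
  obtain ⟨c, hc⟩ : (Le pend).Nonempty := Finset.card_pos.mp (by rw [hLepend]; norm_num)
  set L'v : V → Finset ℝ :=
    fun w => if w = u then (Lv (Sum.inl u)).image (· + c) else Lv (Sum.inl w) with hL'v
  set L'e : Sym2 V → Finset ℝ := fun t => Le (Sym2.map Sum.inl t) with hL'e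
  have hL'vu : L'v u = (Lv (Sum.inl u)).image (· + c) := by simp [hL'v]
  have hL'vw : ∀ w, w ≠ u → L'v w = Lv (Sum.inl w) := by
    intro w hw; simp [hL'v, hw]
  have hL'v2 : ∀ w, (L'v w).card = 2 := by
    intro w
    by_cases hw : w = u
    · rw [hw, hL'vu, Finset.card_image_of_injective _ (add_left_injective c)]
      exact hLv _
    · rw [hL'vw w hw]; exact hLv _
  have hL'e2 : ∀ t ∈ G'.edgeSet, (L'e t).card = 2 := by
    intro t ht
    apply hLe
    rw [addPendant_edgeSet]
    exact Or.inl ⟨t, ht, rfl⟩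
  obtain ⟨f'v, f'e, hf'v, hf'e, hdiff⟩ := h L'v L'e hL'v2 hL'e2
  set fe : Sym2 (V ⊕ Unit) → ℝ :=
    fun s => if hs : ∃ t, Sym2.map Sum.inl t = s then f'e hs.choose else c with hfe_def
  have hfe_map : ∀ t : Sym2 V, fe (Sym2.map Sum.inl t) = f'e t := by
    intro t
    simp only [hfe_def]
    have hs : ∃ t' : Sym2 V, Sym2.map (Sum.inl : V → V ⊕ Unit) t' = Sym2.map Sum.inl t := ⟨t, rfl⟩
    rw [dif_pos hs]
    congr 1
    exact sym2_inl_inj hs.choose_spec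
  have hfe_pend : fe pend = c := by
    simp only [hfe_def]
    rw [dif_neg]
    rintro ⟨t, ht⟩
    exact pend_notMem_image u Set.univ ⟨t, Set.mem_univ t, ht⟩
  set S : ℝ := ∑ᶠ e ∈ G'.incidenceSet u, f'e e with hS
  have hcard : 1 < (Lv (Sum.inr ())).card := by rw [hLv]; norm_num
  obtain ⟨z1, hz1, z2, hz2, hz12⟩ := Finset.one_lt_card.mp hcard
  set T : ℝ := f'v u + S - c with hT
  set z : ℝ := if z1 = T then z2 else z1 with hz
  have hzmem : z ∈ Lv (Sum.inr ()) := by rw [hz]; split <;> assumption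
  have hzT : z ≠ T := by
    rw [hz]; split
    · rename_i h1; exact fun heq => hz12 (h1.trans heq.symm)
    · assumption
  have hfvu : f'v u ∈ (Lv (Sum.inl u)).image (· + c) := by
    have := hf'v u
    rwa [hL'vu] at this
  set fv : V ⊕ Unit → ℝ := fun x =>
    match x with
    | .inl w => if w = u then f'v u - c else f'v w
    | .inr _ => z with hfv_def
  have hfv_u : fv (Sum.inl u) = f'v u - c := by simp [hfv_def]
  have hfv_w : ∀ w, w ≠ u → fv (Sum.inl w) = f'v w := by
    intro w hw; simp [hfv_def, hw]
  have hfv_r : fv (Sum.inr ()) = z := by simp [hfv_def]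
  refine ⟨fv, fe, ?_, ?_, ?_⟩
  · rintro (w | ⟨⟩)
    · by_cases hw : w = u
      · rw [hw, hfv_u]
        obtain ⟨a, ha, hac⟩ := Finset.mem_image.mp hfvu
        have : f'v u - c = a := by have h2 : a + c = f'v u := hac; linarith
        rwa [this]
      · rw [hfv_w w hw]
        have := hf'v w
        rwa [hL'vw w hw] at this
    · exact hzmem
  · intro e he
    rw [addPendant_edgeSet] at he
    rcases he with ⟨t, ht, rfl⟩ | rfl
    · rw [hfe_map]
      have := hf'e t ht
      simpa [hL'e] using this
    · rw [hfe_pend]; exact hc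
  · have hfin : ∀ w : V, (Sym2.map (Sum.inl : V → V ⊕ Unit) '' G'.incidenceSet w).Finite :=
      fun w => Set.toFinite _
    have hsum_inl : ∀ w : V,
        ∑ᶠ e ∈ (addPendant G' u).incidenceSet (Sum.inl w), fe e =
          (∑ᶠ e ∈ G'.incidenceSet w, f'e e) + (if w = u then c else 0) := by
      intro w
      rw [addPendant_incidenceSet_inl]
      have himg : ∑ᶠ e ∈ (Sym2.map (Sum.inl : V → V ⊕ Unit) '' G'.incidenceSet w), fe e =
          ∑ᶠ e ∈ G'.incidenceSet w, f'e e := by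
        rw [finsum_mem_image sym2_inl_inj.injOn]
        exact finsum_mem_congr rfl fun t _ => hfe_map t
      by_cases hw : w = u
      · rw [if_pos hw, if_pos hw]
        rw [finsum_mem_union ?_ (hfin w) (Set.finite_singleton _)]
        · rw [himg, finsum_mem_singleton, hfe_pend]
        · rw [Set.disjoint_singleton_right]
          exact pend_notMem_image u _
      · rw [if_neg hw, if_neg hw, Set.union_empty, himg, add_zero]
    have key : ∀ w : V,
        fv (Sum.inl w) + ∑ᶠ e ∈ (addPendant G' u).incidenceSet (Sum.inl w), fe e =
          f'v w + ∑ᶠ e ∈ G'.incidenceSet w, f'e e := by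
      intro w
      rw [hsum_inl w]
      by_cases hw : w = u
      · rw [hw, hfv_u, if_pos rfl]; ring
      · rw [hfv_w w hw, if_neg hw]; ring
    have key_inr :
        fv (Sum.inr ()) + ∑ᶠ e ∈ (addPendant G' u).incidenceSet (Sum.inr ()), fe e = z + c := by
      rw [addPendant_incidenceSet_inr, finsum_mem_singleton, hfe_pend, hfv_r]
    intro a b hab
    have hab' := hab
    rw [addPendant, fromEdgeSet_adj] at hab'
    obtain ⟨hmem, hne⟩ := hab'
    rcases hmem with ⟨t, ht, hte⟩ | hte
    · induction t with
      | h x y =>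
        rw [Sym2.map_pair_eq, Sym2.eq_iff] at hte
        have hxy : G'.Adj x y := ht
        rcases hte with ⟨hx, hy⟩ | ⟨hx, hy⟩
        · rw [← hx, ← hy, key x, key y]
          exact hdiff x y hxy
        · rw [← hx, ← hy, key y, key x]
          exact hdiff y x hxy.symm
    · rw [Set.mem_singleton_iff, Sym2.eq_iff] at hte
      rcases hte with ⟨ha, hb⟩ | ⟨ha, hb⟩
      · rw [ha, hb, key u, key_inr]
        intro hcon
        apply hzT
        rw [hT, hS]
        linarith
      · rw [ha, hb, key u, key_inr]
        intro hcon
        apply hzT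
        rw [hT, hS]
        linarith
end

section
/- Every cycle C_n (n ≥ 3) is (2,2)-choosable: for every assignment of 2-element sets of real numbers to all vertices and edges of C_n, one can choose a weight from each list so that adjacent vertices receive distinct total weights (vertex weight plus sum of incident edge weights). -/
open SimpleGraph

open Fin.NatCast Fin.CommRing

/-- Pick an element of `S` different from `r` (when `S` has two elements). -/
noncomputable def pick (S : Finset ℝ) (r : ℝ) : ℝ :=
  if h : ∃ x ∈ S, x ≠ r then h.choose else 0

lemma pick_spec {S : Finset ℝ} (hS : S.card = 2) (r : ℝ) :
    pick S r ∈ S ∧ pick S r ≠ r := by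
  obtain ⟨a, b, hab, rfl⟩ := Finset.card_eq_two.mp hS
  have h : ∃ x ∈ ({a, b} : Finset ℝ), x ≠ r := by
    by_cases ha : a = r
    · exact ⟨b, by simp, by rintro rfl; exact hab ha⟩
    · exact ⟨a, by simp, ha⟩
  rw [pick, dif_pos h]
  exact h.choose_spec

lemma key_choice {L0 L1 T : Finset ℝ} (h0 : L0.card = 2) (h1 : L1.card = 2)
    (hT : T.card = 2) (r : ℝ) :
    ∃ t ∈ T, ∃ x1 ∈ L1, ∀ x0 ∈ L0, x0 + r ≠ x1 + t := by
  obtain ⟨a0, b0, hab0, rfl⟩ := Finset.card_eq_two.mp h0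
  obtain ⟨a1, b1, hab1, rfl⟩ := Finset.card_eq_two.mp h1
  obtain ⟨p, q, hpq, rfl⟩ := Finset.card_eq_two.mp hT
  by_contra hc
  push_neg at hc
  obtain ⟨u, hu, e1⟩ := hc p (by simp) a1 (by simp)
  obtain ⟨v, hv, e2⟩ := hc p (by simp) b1 (by simp)
  obtain ⟨w, hw, e3⟩ := hc q (by simp) a1 (by simp)
  obtain ⟨z, hz, e4⟩ := hc q (by simp) b1 (by simp)
  simp only [Finset.mem_insert, Finset.mem_singleton] at hu hv hw hz
  rcases hu with rfl | rfl <;> rcases hv with rfl | rfl <;>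
    rcases hw with rfl | rfl <;> rcases hz with rfl | rfl <;>
    first
      | exact hab1 (by linarith)
      | exact hpq (by linarith)

section CycleLemmas
variable {m : ℕ}

lemma fin_two_ne_zero : (2 : Fin (m + 3)) ≠ 0 := by
  have : ((2 : ℕ) : Fin (m + 3)).val = 2 := Fin.val_cast_of_lt (by omega)
  intro h
  rw [show ((2 : Fin (m+3))) = ((2 : ℕ) : Fin (m+3)) by norm_cast] at h
  rw [h] at this
  simp at this

lemma fin_one_ne_zero : (1 : Fin (m + 3)) ≠ 0 := by
  intro h
  have := congrArg Fin.val h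
  simp [Fin.val_one] at this

lemma edge_rep_unique {i j : Fin (m + 3)} (h : s(i, i + 1) = s(j, j + 1)) : i = j := by
  rw [Sym2.eq_iff] at h
  rcases h with ⟨h1, _⟩ | ⟨h1, h2⟩
  · exact h1
  · exfalso
    have : i = i + 2 := by
      calc i = j + 1 := h1
      _ = (i + 1) + 1 := by rw [h2]
      _ = i + 2 := by ring
    exact fin_two_ne_zero (left_eq_add.mp this)

lemma cyc_adj_iff {u v : Fin (m + 3)} :
    (cycleGraph (m + 3)).Adj u v ↔ u - v = 1 ∨ v - u = 1 :=
  cycleGraph_adj (n := m + 1)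

lemma cyc_adj (i : Fin (m + 3)) : (cycleGraph (m + 3)).Adj i (i + 1) :=
  cyc_adj_iff.mpr (Or.inr (add_sub_cancel_left i 1))

noncomputable def feOf (t : Fin (m + 3) → ℝ) (e : Sym2 (Fin (m + 3))) : ℝ :=
  if h : ∃ i : Fin (m + 3), e = s(i, i + 1) then t h.choose else 0

lemma feOf_eq (t : Fin (m + 3) → ℝ) (i : Fin (m + 3)) : feOf t s(i, i + 1) = t i := by
  have h : ∃ j : Fin (m + 3), s(i, i + 1) = s(j, j + 1) := ⟨i, rfl⟩
  rw [feOf, dif_pos h]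
  exact congrArg t (edge_rep_unique h.choose_spec).symm

lemma cyc_incidence (v : Fin (m + 3)) :
    (cycleGraph (m + 3)).incidenceSet v = {s(v - 1, v), s(v, v + 1)} := by
  ext e
  constructor
  · rintro ⟨he, hv⟩
    induction e with
    | _ a b =>
      rw [SimpleGraph.mem_edgeSet, cyc_adj_iff] at he
      rw [Sym2.mem_iff] at hv
      rcases hv with rfl | rfl
      · rcases he with h | h
        · have hb : b = v - 1 := by rw [sub_eq_iff_eq_add] at h; rw [h]; ring
          subst hb
          exact Set.mem_insert_iff.mpr (Or.inl Sym2.eq_swap)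
        · have hb : b = v + 1 := by rw [sub_eq_iff_eq_add] at h; rw [h]; ring
          subst hb
          exact Set.mem_insert_iff.mpr (Or.inr rfl)
      · rcases he with h | h
        · have ha : a = v + 1 := by rw [sub_eq_iff_eq_add] at h; rw [h]; ring
          subst ha
          exact Set.mem_insert_iff.mpr (Or.inr Sym2.eq_swap)
        · have ha : a = v - 1 := by rw [sub_eq_iff_eq_add] at h; rw [h]; ring
          subst ha
          exact Set.mem_insert_iff.mpr (Or.inl rfl)
  · rintro (rfl | rfl)
    · refine (cycleGraph (m+3)).mk'_mem_incidenceSet_right_iff.mpr ?_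
      have := cyc_adj (v - 1)
      rwa [sub_add_cancel] at this
    · exact (cycleGraph (m+3)).mk'_mem_incidenceSet_left_iff.mpr (cyc_adj v)

lemma edges_ne (v : Fin (m + 3)) : s(v - 1, v) ≠ s(v, v + 1) := by
  intro h
  rw [Sym2.eq_iff] at h
  rcases h with ⟨h1, h2⟩ | ⟨h1, h2⟩
  · exact fin_one_ne_zero (left_eq_add.mp h2)
  · have : v - 1 = v + 1 := h1
    rw [sub_eq_iff_eq_add] at this
    exact fin_two_ne_zero (left_eq_add.mp (this.trans (by ring)))

lemma sum_incidence (t : Fin (m + 3) → ℝ) (v : Fin (m + 3)) :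
    ∑ᶠ e ∈ (cycleGraph (m + 3)).incidenceSet v, feOf t e = t (v - 1) + t v := by
  rw [cyc_incidence, finsum_mem_pair (edges_ne v)]
  have h1 : s(v - 1, v) = s(v - 1, (v - 1) + 1) := by rw [sub_add_cancel]
  rw [h1, feOf_eq, feOf_eq]

lemma fin_last_add_one : ((m + 2 : ℕ) : Fin (m + 3)) + 1 = 0 := by
  rw [← Nat.cast_one, ← Nat.cast_add]
  exact Fin.natCast_self (m + 3)

end CycleLemmas

noncomputable def chainX (m : ℕ) (Lv : Fin (m + 3) → Finset ℝ) (t : Fin (m + 3) → ℝ)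
    (x1 : ℝ) : ℕ → ℝ
  | 0 => x1
  | (k + 1) => pick (Lv ((k + 2 : ℕ) : Fin (m + 3)))
      (chainX m Lv t x1 k + t ((k : ℕ) : Fin (m + 3)) - t ((k + 2 : ℕ) : Fin (m + 3)))

theorem stmt_16 (n : ℕ) (hn : 3 ≤ n) :
    TWChoosable (SimpleGraph.cycleGraph n) 2 2 := by
  obtain ⟨m, rfl⟩ : ∃ m, n = m + 3 := ⟨n - 3, by omega⟩
  intro Lv Le hLv hLe
  have hedge : ∀ i : Fin (m+3), s(i, i+1) ∈ (cycleGraph (m+3)).edgeSet :=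
    fun i => (cycleGraph (m+3)).mem_edgeSet.mpr (cyc_adj i)
  have hLE : ∀ i : Fin (m+3), (Le s(i, i+1)).card = 2 := fun i => hLe _ (hedge i)
  set t' : Fin (m+3) → ℝ := fun i => pick (Le s(i, i+1)) 0 with ht'
  obtain ⟨t1, ht1, x1, hx1, hkey⟩ :=
    key_choice (hLv 0) (hLv 1) (hLE 1) (t' ((m+2 : ℕ) : Fin (m+3)))
  set t : Fin (m+3) → ℝ := fun i => if i = 1 then t1 else t' i with ht
  have htmem : ∀ i, t i ∈ Le s(i, i+1) := by
    intro i
    by_cases h : i = 1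
    · subst h; simpa [ht] using ht1
    · simp only [ht, if_neg h, ht']; exact (pick_spec (hLE i) 0).1
  have hm2ne1 : ((m+2 : ℕ) : Fin (m+3)) ≠ 1 := by
    intro h
    have := congrArg Fin.val h
    rw [Fin.val_cast_of_lt (by omega), Fin.val_one] at this
    omega
  have htm2 : t ((m+2:ℕ) : Fin (m+3)) = t' ((m+2:ℕ) : Fin (m+3)) := by
    simp only [ht, if_neg hm2ne1]
  set X := chainX m Lv t x1 with hX
  have hXmem : ∀ k : ℕ, X k ∈ Lv ((k+1 : ℕ) : Fin (m+3)) := by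
    intro k
    cases k with
    | zero => simpa [hX, chainX] using hx1
    | succ k => exact (pick_spec (hLv _) _).1
  set x0 : ℝ := pick (Lv 0) (X (m+1) + t ((m+1:ℕ) : Fin (m+3)) - t 0) with hx0
  set fv : Fin (m+3) → ℝ := fun i => if i = 0 then x0 else X (i.val - 1) with hfv
  refine ⟨fv, feOf t, ?_, ?_, ?_⟩
  · intro v
    by_cases h : v = 0
    · subst h
      simp only [hfv, if_pos rfl, hx0]
      exact (pick_spec (hLv 0) _).1
    · simp only [hfv, if_neg h]
      have hv : v.val ≠ 0 := fun hh => h (Fin.ext hh)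
      have hcast : ((v.val - 1 + 1 : ℕ) : Fin (m+3)) = v := by
        rw [Nat.sub_add_cancel (by omega)]
        exact Fin.cast_val_eq_self v
      have h2 := hXmem (v.val - 1)
      rwa [hcast] at h2
  · intro e he
    induction e with
    | _ a b =>
      rw [SimpleGraph.mem_edgeSet, cyc_adj_iff] at he
      rcases he with h | h
      · have ha : a = b + 1 := by rw [sub_eq_iff_eq_add] at h; rw [h]; ring
        subst ha
        rw [show s(b + 1, b) = s(b, b + 1) from Sym2.eq_swap, feOf_eq]
        exact htmem b
      · have hb : b = a + 1 := by rw [sub_eq_iff_eq_add] at h; rw [h]; ring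
        subst hb
        rw [feOf_eq]
        exact htmem a
  · have key : ∀ i : Fin (m+3), fv i + t (i - 1) ≠ fv (i + 1) + t (i + 1) := by
      intro i
      by_cases hi0 : i.val = 0
      · have : i = 0 := Fin.ext hi0
        subst this
        have hneg : (0 : Fin (m+3)) - 1 = ((m+2:ℕ) : Fin (m+3)) := by
          rw [← fin_last_add_one]; ring
        rw [hneg, zero_add]
        have hfv0 : fv 0 = x0 := by simp only [hfv, if_pos rfl]
        have hfv1 : fv 1 = x1 := by
          simp only [hfv, if_neg fin_one_ne_zero, Fin.val_one]
          rfl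
        have ht1' : t 1 = t1 := by simp only [ht, if_pos rfl]
        rw [hfv0, hfv1, ht1', htm2]
        exact hkey x0 (pick_spec (hLv 0) _).1
      · by_cases hilast : i.val = m + 2
        · have hi : i = ((m+2:ℕ) : Fin (m+3)) := by
            rw [← Fin.cast_val_eq_self i, hilast]
          have hip1 : i + 1 = 0 := by rw [hi]; exact fin_last_add_one
          have him1 : i - 1 = ((m+1:ℕ) : Fin (m+3)) := by
            rw [hi, Nat.cast_succ]; ring
          have hfvi : fv i = X (m+1) := by
            have : i ≠ 0 := fun hh => by rw [hh] at hilast; simp at hilast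
            simp only [hfv, if_neg this, hilast]
            congr 1
          have hfv0 : fv 0 = x0 := by simp only [hfv, if_pos rfl]
          rw [hip1, him1, hfvi, hfv0]
          have := (pick_spec (hLv 0)
            (X (m+1) + t ((m+1:ℕ) : Fin (m+3)) - t 0)).2
          rw [← hx0] at this
          intro hcontra
          exact this (by linarith)
        · set k := i.val - 1 with hk
          have hkval : i.val = k + 1 := by omega
          have hklt : k + 2 < m + 3 := by have := i.isLt; omega
          have hi : i = ((k+1:ℕ) : Fin (m+3)) := by
            rw [← Fin.cast_val_eq_self i, hkval]
          have him1 : i - 1 = ((k:ℕ) : Fin (m+3)) := by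
            rw [hi, Nat.cast_succ]; ring
          have hip1 : i + 1 = ((k+2:ℕ) : Fin (m+3)) := by
            rw [hi]; push_cast; ring
          have hfvi : fv i = X k := by
            have : i ≠ 0 := fun hh => by rw [hh] at hkval; simp at hkval
            simp only [hfv, if_neg this, ← hk]
          have hfvip1 : fv ((k+2:ℕ) : Fin (m+3)) = X (k + 1) := by
            have hval : (((k+2:ℕ) : Fin (m+3))).val = k + 2 := Fin.val_cast_of_lt hklt
            have hne : ((k+2:ℕ) : Fin (m+3)) ≠ 0 := by
              intro hh; rw [hh] at hval; simp at hval
            simp only [hfv, if_neg hne, hval]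
            congr 1
          have hXstep : X (k + 1) = pick (Lv ((k + 2 : ℕ) : Fin (m + 3)))
              (X k + t ((k : ℕ) : Fin (m + 3)) - t ((k + 2 : ℕ) : Fin (m + 3))) := rfl
          have hne := (pick_spec (hLv ((k + 2 : ℕ) : Fin (m + 3)))
              (X k + t ((k : ℕ) : Fin (m + 3)) - t ((k + 2 : ℕ) : Fin (m + 3)))).2
          rw [← hXstep] at hne
          rw [him1, hip1, hfvi, hfvip1]

          intro hcontra
          exact hne (by linarith)
    intro u v huv
    rw [sum_incidence, sum_incidence]
    rcases cyc_adj_iff.mp huv with h | h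
    · have hu : u = v + 1 := by rw [sub_eq_iff_eq_add] at h; rw [h]; ring
      subst hu
      rw [add_sub_cancel_right]
      intro heq
      exact key v (by linarith)
    · have hv : v = u + 1 := by rw [sub_eq_iff_eq_add] at h; rw [h]; ring
      subst hv
      rw [add_sub_cancel_right]
      intro heq
      exact key u (by linarith)
end

section
/- Every unicyclic graph (connected graph with exactly one cycle) is (2,2)-choosable. -/
open SimpleGraph

open Finset

namespace TWAux

noncomputable def ach (B : ℕ → Finset ℝ) (c : ℝ) : ℕ → Finset ℝ
  | 0 => (B 0).erase c
  | k+1 => if 2 ≤ (ach B c k).card then B (k+1) else (B (k+1)) \ (ach B c k)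

variable {B : ℕ → Finset ℝ} {c : ℝ}

lemma ach_subset (hB : ∀ k, (B k).card = 2) (k : ℕ) : ach B c k ⊆ B k := by
  cases k with
  | zero => exact Finset.erase_subset _ _
  | succ k => by_cases h : 2 ≤ (ach B c k).card <;> simp [ach, h, Finset.sdiff_subset]

lemma ach_nonempty (hB : ∀ k, (B k).card = 2) (k : ℕ) : (ach B c k).Nonempty := by
  induction k with
  | zero =>
    rw [← Finset.card_pos]
    have h1 : (B 0).card - 1 ≤ ((B 0).erase c).card := Finset.pred_card_le_card_erase
    have := hB 0
    show 0 < ((B 0).erase c).card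
    omega
  | succ k ih =>
    by_cases h : 2 ≤ (ach B c k).card
    · simp only [ach, if_pos h]
      rw [← Finset.card_pos, hB (k+1)]; omega
    · simp only [ach, if_neg h]
      rw [← Finset.card_pos]
      have h1 : (B (k+1)).card - (ach B c k).card ≤ ((B (k+1)) \ (ach B c k)).card :=
        Finset.le_card_sdiff _ _
      have := hB (k+1)
      omega

lemma ach_sound (hB : ∀ k, (B k).card = 2) (k : ℕ) :
    ∀ d ∈ ach B c k, ∃ β : ℕ → ℝ,
      (∀ j, j ≤ k → β j ∈ B j) ∧ (∀ j, j + 1 ≤ k → β j ≠ β (j+1)) ∧ β 0 ≠ c ∧ β k = d := by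
  induction k with
  | zero =>
    intro d hd
    refine ⟨fun _ => d, ?_, fun j hj => by omega, Finset.ne_of_mem_erase hd, rfl⟩
    intro j hj; interval_cases j; exact Finset.mem_of_mem_erase hd
  | succ k ih =>
    intro d hd
    have hd' : ∃ d' ∈ ach B c k, d' ≠ d := by
      by_cases h : 2 ≤ (ach B c k).card
      · exact Finset.exists_mem_ne (by omega) d
      · simp only [ach, if_neg h] at hd
        obtain ⟨d', hd'⟩ := ach_nonempty hB (c := c) k
        exact ⟨d', hd', fun hdd => (Finset.mem_sdiff.mp hd).2 (hdd ▸ hd')⟩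
    obtain ⟨d', hd'm, hd'ne⟩ := hd'
    obtain ⟨β, hmem, hcons, h0, hk⟩ := ih d' hd'm
    refine ⟨fun j => if j ≤ k then β j else d, ?_, ?_, ?_, ?_⟩
    · intro j hj
      by_cases hjk : j ≤ k
      · simpa [hjk] using hmem j hjk
      · have : j = k + 1 := by omega
        subst this
        simp only [if_neg hjk]
        exact ach_subset hB (k+1) hd
    · intro j hj
      by_cases hjk : j + 1 ≤ k
      · simpa [hjk, Nat.le_of_succ_le hjk] using hcons j hjk
      · have hjj : j = k := by omega
        subst hjj
        simp only [le_refl, if_pos, if_neg (by omega : ¬ j + 1 ≤ j), hk]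
        exact hd'ne
    · simpa using h0
    · simp

lemma ach_two_mono (hB : ∀ k, (B k).card = 2) {k : ℕ} (h2 : 2 ≤ (ach B c k).card) :
    ∀ j, k ≤ j → 2 ≤ (ach B c j).card := by
  intro j hj
  induction j, hj using Nat.le_induction with
  | base => exact h2
  | succ j hj ih =>
    have : ach B c (j+1) = B (j+1) := by simp [ach, if_pos ih]
    rw [this, hB (j+1)]

lemma pair_eq {a b c d : ℝ} (hab : a ≠ b) (hcd : c ≠ d)
    (ha : a ∈ ({c, d} : Finset ℝ)) (hb : b ∈ ({c, d} : Finset ℝ)) :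
    ({a, b} : Finset ℝ) = {c, d} := by
  apply Finset.eq_of_subset_of_card_le
  · intro x hx
    rcases Finset.mem_insert.mp hx with h | h
    · exact h ▸ ha
    · rw [Finset.mem_singleton.mp h]; exact hb
  · rw [Finset.card_pair hcd, Finset.card_pair hab]

lemma shift_ne {s : Finset ℝ} (hs : s.Nonempty) {Δ : ℝ} (hΔ : Δ ≠ 0) :
    s.image (· + Δ) ≠ s := by
  intro h
  have hinj : Function.Injective (· + Δ) := fun a b h => by simpa using h
  have h1 : ∑ x ∈ s.image (· + Δ), x = (∑ x ∈ s, x) + s.card * Δ := by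
    rw [Finset.sum_image (fun a _ b _ hh => hinj hh), Finset.sum_add_distrib]
    simp [Finset.sum_const, nsmul_eq_mul]
  rw [h] at h1
  have hcard : (s.card : ℝ) * Δ = 0 := by linarith
  rcases mul_eq_zero.mp hcard with h2 | h2
  · rw [Nat.cast_eq_zero] at h2
    have := hs.card_pos; omega
  · exact hΔ h2

/-- If the final achievable set is contained in `{c}`, extract the forced chain. -/
lemma fail_chain (hB : ∀ k, (B k).card = 2) (K : ℕ)
    (hfail : ach B c K ⊆ {c}) :
    ∃ d : ℕ → ℝ, (∀ k, k ≤ K → ach B c k = {d k}) ∧ c ∈ B 0 ∧ B 0 = {c, d 0} ∧ d 0 ≠ c ∧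
      (∀ k, k < K → B (k+1) = {d k, d (k+1)} ∧ d (k+1) ≠ d k) ∧ d K = c ∧
      (∀ k, k ≤ K → d k ∈ B k) := by
  have hKone : (ach B c K).card = 1 := by
    have h1 := ach_nonempty hB (c := c) K
    have h2 : ach B c K = {c} := by
      rcases Finset.subset_singleton_iff.mp hfail with h | h
      · exact absurd h h1.ne_empty
      · exact h
    rw [h2]; simp
  have hsing : ∀ k, k ≤ K → (ach B c k).card = 1 := by
    intro k hk
    have h1 := (ach_nonempty hB (c := c) k).card_pos
    by_contra hne
    have h2 : 2 ≤ (ach B c k).card := by omega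
    have := ach_two_mono hB h2 K hk
    omega
  set d : ℕ → ℝ := fun k => (ach B c k).min' (ach_nonempty hB k) with hd
  have hsd : ∀ k, k ≤ K → ach B c k = {d k} := by
    intro k hk
    obtain ⟨a, ha⟩ := Finset.card_eq_one.mp (hsing k hk)
    rw [ha, hd]; simp [ha]
  have hdK : d K = c := by
    have := hsd K le_rfl
    have hc : d K ∈ ({c} : Finset ℝ) := hfail (this ▸ Finset.mem_singleton_self _)
    exact Finset.mem_singleton.mp hc
  have h0 : c ∈ B 0 ∧ B 0 = {c, d 0} ∧ d 0 ≠ c := by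
    have h1 : (B 0).erase c = {d 0} := hsd 0 (by omega)
    have hc : c ∈ B 0 := by
      by_contra hc
      rw [Finset.erase_eq_of_notMem hc] at h1
      have h2 := hB 0
      rw [h1] at h2; simp at h2
    have hne : d 0 ≠ c := by
      have : d 0 ∈ (B 0).erase c := h1 ▸ Finset.mem_singleton_self _
      exact Finset.ne_of_mem_erase this
    refine ⟨hc, ?_, hne⟩
    rw [← Finset.insert_erase hc, h1]
  have hchain : ∀ k, k < K → B (k+1) = {d k, d (k+1)} ∧ d (k+1) ≠ d k := by
    intro k hkK
    have hk1 : (ach B c k).card = 1 := hsing k (by omega)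
    have hnot : ¬ 2 ≤ (ach B c k).card := by omega
    have hstep : ach B c (k+1) = B (k+1) \ (ach B c k) := by simp [ach, if_neg hnot]
    rw [hsd k (by omega)] at hstep
    have h1 : ach B c (k+1) = {d (k+1)} := hsd (k+1) (by omega)
    rw [h1] at hstep
    have hdk : d k ∈ B (k+1) := by
      by_contra hdk
      have : B (k+1) \ {d k} = B (k+1) := by
        rw [Finset.sdiff_eq_self_iff_disjoint]
        simpa using hdk
      rw [this] at hstep
      have h2 := hB (k+1)
      rw [← hstep] at h2; simp at h2
    have hne : d (k+1) ≠ d k := by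
      have : d (k+1) ∈ B (k+1) \ {d k} := hstep ▸ Finset.mem_singleton_self _
      simpa using (Finset.mem_sdiff.mp this).2
    constructor
    · rw [Finset.sdiff_singleton_eq_erase] at hstep
      rw [← Finset.insert_erase hdk, hstep]
    · exact hne
  refine ⟨d, hsd, h0.1, h0.2.1, h0.2.2, hchain, hdK, ?_⟩
  intro k hk
  have := hsd k hk
  exact ach_subset hB k (this ▸ Finset.mem_singleton_self _)

/-- Two forced chains with distinct starting exclusions swap along the path. -/
lemma chain_swap {c c' : ℝ} (hcc : c ≠ c') {d d' : ℕ → ℝ} (N : ℕ)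
    (h1 : B 0 = {c, d 0}) (h1' : B 0 = {c', d' 0})
    (hd0 : d 0 ≠ c) (hd0' : d' 0 ≠ c')
    (hch : ∀ k, k < N → B (k+1) = {d k, d (k+1)} ∧ d (k+1) ≠ d k)
    (hch' : ∀ k, k < N → B (k+1) = {d' k, d' (k+1)} ∧ d' (k+1) ≠ d' k) :
    ∀ k, k ≤ N → d k ≠ d' k ∧ ({d k, d' k} : Finset ℝ) = {c, c'} := by
  have base : d 0 = c' ∧ d' 0 = c := by
    constructor
    · have : c' ∈ ({c, d 0} : Finset ℝ) := h1 ▸ (h1' ▸ Finset.mem_insert_self c' {d' 0})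
      rcases Finset.mem_insert.mp this with h | h
      · exact absurd h.symm hcc
      · exact (Finset.mem_singleton.mp h).symm
    · have : c ∈ ({c', d' 0} : Finset ℝ) := h1' ▸ (h1 ▸ Finset.mem_insert_self c {d 0})
      rcases Finset.mem_insert.mp this with h | h
      · exact absurd h.symm (Ne.symm hcc)
      · exact (Finset.mem_singleton.mp h).symm
  intro k hk
  induction k with
  | zero =>
    refine ⟨?_, ?_⟩
    · rw [base.1, base.2]; exact Ne.symm hcc
    · rw [base.1, base.2, Finset.pair_comm]
  | succ k ih =>
    obtain ⟨ihne, ihpair⟩ := ih (by omega)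
    obtain ⟨hB1, hne1⟩ := hch k (by omega)
    obtain ⟨hB1', hne1'⟩ := hch' k (by omega)
    have hswap : d (k+1) = d' k ∧ d' (k+1) = d k := by
      constructor
      · have : d' k ∈ ({d k, d (k+1)} : Finset ℝ) :=
          hB1 ▸ (hB1' ▸ Finset.mem_insert_self (d' k) {d' (k+1)})
        rcases Finset.mem_insert.mp this with h | h
        · exact absurd h.symm ihne
        · exact (Finset.mem_singleton.mp h).symm
      · have : d k ∈ ({d' k, d' (k+1)} : Finset ℝ) :=
          hB1' ▸ (hB1 ▸ Finset.mem_insert_self (d k) {d (k+1)})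
        rcases Finset.mem_insert.mp this with h | h
        · exact absurd h.symm (Ne.symm ihne)
        · exact (Finset.mem_singleton.mp h).symm
    refine ⟨?_, ?_⟩
    · rw [hswap.1, hswap.2]; exact Ne.symm ihne
    · rw [hswap.1, hswap.2, Finset.pair_comm, ihpair]

lemma ach_congr {B' : ℕ → Finset ℝ} (N : ℕ) (hBB : ∀ j, j ≤ N → B j = B' j) :
    ∀ k, k ≤ N → ach B c k = ach B' c k := by
  intro k hk
  induction k with
  | zero => simp [ach, hBB 0 (by omega)]
  | succ k ih =>
    have h1 := ih (by omega)
    simp [ach, h1, hBB (k+1) hk]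

section Cycle

variable {m : ℕ}

/-- Build a cycle coloring from an achievable path end value. -/
lemma cycle_success (hm : 3 ≤ m) (Bc : ZMod m → Finset ℝ) (hBc : ∀ i, (Bc i).card = 2)
    (r : ZMod m) (c : ℝ) (hc : c ∈ Bc r)
    {d : ℝ} (hd : d ∈ ach (fun j => Bc (r - 1 - (j : ZMod m))) c (m - 2)) (hdc : d ≠ c) :
    ∃ β : ZMod m → ℝ, (∀ i, β i ∈ Bc i) ∧ (∀ i, β i ≠ β (i + 1)) ∧ β r = c := by
  haveI : NeZero m := ⟨by omega⟩
  classical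
  set B : ℕ → Finset ℝ := fun j => Bc (r - 1 - (j : ZMod m)) with hBdef
  have hB : ∀ k, (B k).card = 2 := fun k => hBc _
  obtain ⟨βp, hmem, hcons, h0, hK⟩ := ach_sound hB (m - 2) d hd
  have hcast : ∀ z : ZMod m, ((z.val : ℕ) : ZMod m) = z := fun z => by
    rw [ZMod.natCast_val, ZMod.cast_id]
  have h10 : (1 : ZMod m) ≠ 0 := by
    intro h
    have h1 : ((1:ℕ) : ZMod m).val = 1 := ZMod.val_cast_of_lt (by omega)
    rw [Nat.cast_one, h] at h1
    simp at h1
  have hm2cast : ((m - 2 : ℕ) : ZMod m) = -2 := by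
    have hmm : ((m : ℕ) : ZMod m) = 0 := ZMod.natCast_self m
    rw [Nat.cast_sub (by omega : 2 ≤ m), hmm]
    push_cast
    ring
  have hvle : ∀ i : ZMod m, i ≠ r → (r - 1 - i).val ≤ m - 2 := by
    intro i hi
    have h1 : (r - 1 - i).val < m := ZMod.val_lt _
    by_contra hcon
    have h2 : (r - 1 - i).val = m - 1 := by omega
    have h3 : r - 1 - i = -1 := by
      have h4 := hcast (r - 1 - i)
      rw [h2] at h4
      rw [← h4, Nat.cast_sub (by omega : 1 ≤ m), ZMod.natCast_self]
      ring
    apply hi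
    linear_combination -h3
  set βc : ZMod m → ℝ := fun i => if i = r then c else βp ((r - 1 - i).val) with hβc
  have hβmem : ∀ i, βc i ∈ Bc i := by
    intro i
    by_cases hi : i = r
    · simp only [hβc, if_pos hi, hi]; exact hc
    · simp only [hβc, if_neg hi]
      have h1 := hmem _ (hvle i hi)
      have h2 : B ((r - 1 - i).val) = Bc i := by
        simp only [hBdef]
        congr 1
        rw [hcast]
        ring
      rwa [h2] at h1
  have hprop : ∀ i, βc i ≠ βc (i + 1) := by
    intro i
    by_cases hi : i = r
    · have hir : i + 1 ≠ r := by
        rw [hi]; intro h; exact h10 (by linear_combination h)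
      simp only [hβc, if_pos hi, if_neg hir]
      have harg : r - 1 - (i + 1) = -2 := by rw [hi]; ring
      have hval : (r - 1 - (i+1)).val = m - 2 := by
        rw [harg, ← hm2cast, ZMod.val_cast_of_lt (by omega)]
      rw [hval, hK]
      exact fun h => hdc h.symm
    · by_cases hi1 : i + 1 = r
      · have harg : r - 1 - i = 0 := by rw [← hi1]; ring
        simp only [hβc, if_neg hi, if_pos hi1, harg]
        simpa using h0
      · have ha0 : r - 1 - i ≠ 0 := by
          intro h
          apply hi1
          linear_combination -h
        have hv1 : 1 ≤ (r - 1 - i).val := by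
          rcases Nat.eq_zero_or_pos (r - 1 - i).val with h | h
          · exact absurd ((ZMod.val_eq_zero _).mp h) ha0
          · omega
        have hsub : (r - 1 - (i+1)).val = (r - 1 - i).val - 1 := by
          have h1 : r - 1 - (i + 1) = (r - 1 - i) - 1 := by ring
          have h2 : (r - 1 - i) - 1 = (((r - 1 - i).val - 1 : ℕ) : ZMod m) := by
            rw [Nat.cast_sub hv1, hcast, Nat.cast_one]
          rw [h1, h2, ZMod.val_cast_of_lt]
          have := ZMod.val_lt (r - 1 - i); omega
        simp only [hβc, if_neg hi, if_neg hi1]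
        have hj := hcons ((r - 1 - i).val - 1) (by
          have := hvle i hi; omega)
        have hj1 : (r - 1 - i).val - 1 + 1 = (r - 1 - i).val := by omega
        rw [hj1] at hj
        rw [hsub]
        exact fun h => hj h.symm
  exact ⟨βc, hβmem, hprop, by simp [hβc]⟩

end Cycle

theorem cycle_core {m : ℕ} (hm : 3 ≤ m) (Sl Tl : ZMod m → Finset ℝ)
    (hS : ∀ i, (Sl i).card = 2) (hT : ∀ i, (Tl i).card = 2) (r : ZMod m) (v₀ : ℝ) :
    ∃ α t : ZMod m → ℝ, (∀ i, α i ∈ Sl i) ∧ (∀ i, t i ∈ Tl i) ∧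
      (∀ i, α i + t (i - 1) + t i ≠ α (i + 1) + t i + t (i + 1)) ∧
      α r + t (r - 1) + t r ≠ v₀ := by
  haveI : NeZero m := ⟨by omega⟩
  classical
  choose t0 ht0 using fun i => Finset.card_pos.mp (by rw [hT i]; omega : 0 < (Tl i).card)
  obtain ⟨x, x', hxx', hTr⟩ := Finset.card_eq_two.mp (hT r)
  set tf : ℝ → ZMod m → ℝ := fun τ => Function.update t0 r τ with htf
  set Bct : (ZMod m → ℝ) → ZMod m → Finset ℝ :=
    fun t i => (Sl i).image (· + (t (i - 1) + t i)) with hBct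
  have hBcard : ∀ t i, (Bct t i).card = 2 := by
    intro t i
    simp only [hBct]
    rw [Finset.card_image_of_injective _ (add_left_injective _), hS i]
  have htfr : ∀ τ : ℝ, tf τ r = τ := fun τ => by simp [htf]
  have h10 : (1 : ZMod m) ≠ 0 := by
    intro h
    have h1 : ((1:ℕ) : ZMod m).val = 1 := ZMod.val_cast_of_lt (by omega)
    rw [Nat.cast_one, h] at h1
    simp at h1
  have hm1cast : ((m - 1 : ℕ) : ZMod m) = -1 := by
    rw [Nat.cast_sub (by omega : 1 ≤ m), ZMod.natCast_self]
    push_cast; ring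
  have hm2cast : ((m - 2 : ℕ) : ZMod m) = -2 := by
    rw [Nat.cast_sub (by omega : 2 ≤ m), ZMod.natCast_self]
    push_cast; ring
  have hr1r : r - 1 ≠ r := by intro h; exact h10 (by linear_combination -h)
  have hr1r' : r + 1 ≠ r := by intro h; exact h10 (by linear_combination h)
  have htfo : ∀ (τ : ℝ) (i : ZMod m), i ≠ r → tf τ i = t0 i := fun τ i hi => by
    simp [htf, Function.update_of_ne hi]
  have htfmem : ∀ τ, τ ∈ Tl r → ∀ i, tf τ i ∈ Tl i := by
    intro τ hτ i
    by_cases hi : i = r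
    · rw [hi, htfr]; exact hτ
    · rw [htfo τ i hi]; exact ht0 i
  have hreduce : ∀ τ, τ ∈ Tl r →
      (∃ β : ZMod m → ℝ, (∀ i, β i ∈ Bct (tf τ) i) ∧ (∀ i, β i ≠ β (i + 1)) ∧ β r ≠ v₀) →
      (∃ α t : ZMod m → ℝ, (∀ i, α i ∈ Sl i) ∧ (∀ i, t i ∈ Tl i) ∧
        (∀ i, α i + t (i - 1) + t i ≠ α (i + 1) + t i + t (i + 1)) ∧
        α r + t (r - 1) + t r ≠ v₀) := by
    rintro τ hτ ⟨β, hβm, hβp, hβr⟩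
    have hmem : ∀ i, ∃ a, a ∈ Sl i ∧ a + (tf τ (i-1) + tf τ i) = β i := by
      intro i
      have h1 := hβm i
      rw [hBct] at h1
      obtain ⟨a, ha, hae⟩ := Finset.mem_image.mp h1
      exact ⟨a, ha, hae⟩
    choose α hα hαe using hmem
    refine ⟨α, tf τ, hα, htfmem τ hτ, ?_, ?_⟩
    · intro i h
      apply hβp i
      have hii : i + 1 - 1 = i := by ring
      rw [← hαe i, ← hαe (i+1), hii]
      linarith
    · intro h
      apply hβr
      rw [← hαe r]
      linarith
  by_cases hs1 : ∃ β : ZMod m → ℝ,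
      (∀ i, β i ∈ Bct (tf x) i) ∧ (∀ i, β i ≠ β (i + 1)) ∧ β r ≠ v₀
  · exact hreduce x (by rw [hTr]; simp) hs1
  by_cases hs2 : ∃ β : ZMod m → ℝ,
      (∀ i, β i ∈ Bct (tf x') i) ∧ (∀ i, β i ≠ β (i + 1)) ∧ β r ≠ v₀
  · exact hreduce x' (by rw [hTr]; simp) hs2
  exfalso
  set K := m - 2 with hKdef
  have hfail : ∀ τ : ℝ,
      ¬ (∃ β : ZMod m → ℝ, (∀ i, β i ∈ Bct (tf τ) i) ∧ (∀ i, β i ≠ β (i + 1)) ∧ β r ≠ v₀) →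
      ∀ c ∈ (Bct (tf τ) r).erase v₀,
      ach (fun j => Bct (tf τ) (r - 1 - (j : ZMod m))) c K ⊆ {c} := by
    intro τ hns c hc d hd
    rw [Finset.mem_singleton]
    by_contra hdc
    rw [hKdef] at hd
    obtain ⟨β, h1, h2, h3⟩ := cycle_success hm (Bct (tf τ)) (fun i => hBcard _ i) r c
      (Finset.mem_of_mem_erase hc) hd hdc
    exact hns ⟨β, h1, h2, by rw [h3]; exact Finset.ne_of_mem_erase hc⟩
  have hfail1 := hfail x hs1
  have hfail2 := hfail x' hs2
  clear hfail hs1 hs2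
  set P1 : ℕ → Finset ℝ := fun j => Bct (tf x) (r - 1 - (j : ZMod m)) with hP1
  set P2 : ℕ → Finset ℝ := fun j => Bct (tf x') (r - 1 - (j : ZMod m)) with hP2
  have hP1card : ∀ k, (P1 k).card = 2 := fun k => hBcard _ _
  have hP2card : ∀ k, (P2 k).card = 2 := fun k => hBcard _ _
  have hK1 : 1 ≤ K := by omega
  set Δ := x' - x with hΔdef
  have hΔ : Δ ≠ 0 := sub_ne_zero.mpr (Ne.symm hxx')
  -- basic list computations
  have hσ1e : Bct (tf x) r = (Sl r).image (· + (t0 (r-1) + x)) := by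
    simp only [hBct, htfo x _ hr1r, htfr x]
  have hσ2e : Bct (tf x') r = (Sl r).image (· + (t0 (r-1) + x')) := by
    simp only [hBct, htfo x' _ hr1r, htfr x']
  have hσshift : Bct (tf x') r = (Bct (tf x) r).image (· + Δ) := by
    rw [hσ1e, hσ2e, Finset.image_image]
    congr 1
    funext a
    simp only [Function.comp_apply, Function.comp]
    rw [hΔdef]
    ring
  have hPK1 : P1 K = Bct (tf x) (r + 1) := by
    show Bct (tf x) (r - 1 - ((K : ℕ) : ZMod m)) = Bct (tf x) (r + 1)
    rw [hm2cast]
    congr 1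
    ring
  have hPK2 : P2 K = Bct (tf x') (r + 1) := by
    show Bct (tf x') (r - 1 - ((K : ℕ) : ZMod m)) = Bct (tf x') (r + 1)
    rw [hm2cast]
    congr 1
    ring
  have hr11 : r + 1 - 1 = r := by ring
  have hB1e : Bct (tf x) (r + 1) = (Sl (r+1)).image (· + (x + t0 (r+1))) := by
    simp only [hBct, hr11, htfr x, htfo x _ hr1r']
  have hB2e : Bct (tf x') (r + 1) = (Sl (r+1)).image (· + (x' + t0 (r+1))) := by
    simp only [hBct, hr11, htfr x', htfo x' _ hr1r']
  have hPK2shift : P2 K = (P1 K).image (· + Δ) := by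
    rw [hPK1, hPK2, hB1e, hB2e, Finset.image_image]
    congr 1
    funext a
    simp only [Function.comp_apply, Function.comp]
    rw [hΔdef]
    ring
  have hPeq : ∀ j, j < K → P1 j = P2 j := by
    intro j hj
    show Bct (tf x) (r - 1 - (j : ZMod m)) = Bct (tf x') (r - 1 - (j : ZMod m))
    have hz1 : r - 1 - (j : ZMod m) ≠ r := by
      intro h
      have hcj : ((j : ℕ) : ZMod m) = ((m - 1 : ℕ) : ZMod m) := by
        rw [hm1cast]; linear_combination -h
      have h2 := congrArg ZMod.val hcj
      rw [ZMod.val_cast_of_lt (by omega), ZMod.val_cast_of_lt (by omega)] at h2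
      omega
    have hz2 : r - 1 - (j : ZMod m) - 1 ≠ r := by
      intro h
      have hcj : ((j : ℕ) : ZMod m) = ((m - 2 : ℕ) : ZMod m) := by
        rw [hm2cast]; linear_combination -h
      have h2 := congrArg ZMod.val hcj
      rw [ZMod.val_cast_of_lt (by omega), ZMod.val_cast_of_lt (by omega)] at h2
      omega
    simp only [hBct, htfo x _ hz2, htfo x _ hz1, htfo x' _ hz2, htfo x' _ hz1]
  obtain ⟨c1, c2, h12, hσ1pair⟩ := Finset.card_eq_two.mp (hBcard (tf x) r)
  by_cases hv1 : v₀ ∈ Bct (tf x) r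
  · -- case (ii) : v₀ ∈ σ1
    have hgetc : ∃ c, c ≠ v₀ ∧ Bct (tf x) r = {v₀, c} := by
      rw [hσ1pair] at hv1
      rcases Finset.mem_insert.mp hv1 with h | h
      · refine ⟨c2, ?_, ?_⟩
        · rw [h]; exact Ne.symm h12
        · rw [hσ1pair, h]
      · have h' := Finset.mem_singleton.mp h
        refine ⟨c1, ?_, ?_⟩
        · rw [h']; exact h12
        · rw [hσ1pair, h', Finset.pair_comm]
    obtain ⟨c, hcv, hσ1⟩ := hgetc
    have hcmem : c ∈ (Bct (tf x) r).erase v₀ := by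
      rw [hσ1]; exact Finset.mem_erase.mpr ⟨hcv, by simp⟩
    obtain ⟨d, hsd, hcB0, hB0, hd0c, hch, hdK, hdmem⟩ := fail_chain hP1card K (hfail1 c hcmem)
    have hσ2 : Bct (tf x') r = {v₀ + Δ, c + Δ} := by
      rw [hσshift, hσ1]
      simp
    have hKK : K - 1 + 1 = K := by omega
    by_cases hv2 : v₀ ∈ Bct (tf x') r
    · -- (ii-b)
      have hvcd : v₀ = c + Δ := by
        rw [hσ2] at hv2
        rcases Finset.mem_insert.mp hv2 with h | h
        · exact absurd h (by intro hh; exact hΔ (by linarith))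
        · exact Finset.mem_singleton.mp h
      have hcc' : c ≠ v₀ + Δ := by
        intro h; apply hΔ; rw [hvcd] at h; linarith
      have hc'mem : v₀ + Δ ∈ (Bct (tf x') r).erase v₀ := by
        rw [hσ2]
        exact Finset.mem_erase.mpr ⟨by intro h; exact hΔ (by linarith), by simp⟩
      obtain ⟨d', hsd', hcB0', hB0', hd0c', hch', hdK', hdmem'⟩ :=
        fail_chain hP2card K (hfail2 _ hc'mem)
      have hB0'' : P1 0 = {v₀ + Δ, d' 0} := by rw [hPeq 0 (by omega)]; exact hB0'
      have hch'' : ∀ k, k < K - 1 → (P1 (k+1) = {d' k, d' (k+1)} ∧ d' (k+1) ≠ d' k) := by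
        intro k hk
        have h := hch' k (by omega)
        rw [← hPeq (k+1) (by omega)] at h
        exact h
      have hQ := chain_swap hcc' (K-1) hB0 hB0'' hd0c hd0c'
        (fun k hk => hch k (by omega)) hch''
      have hchKp := hch (K-1) (by omega)
      rw [hKK] at hchKp
      have hdK1 : d (K-1) = v₀ + Δ := by
        have hmemQ : d (K-1) ∈ ({c, v₀ + Δ} : Finset ℝ) := by
          rw [← (hQ (K-1) le_rfl).2]; simp
        rcases Finset.mem_insert.mp hmemQ with h | h
        · exact absurd (by rw [hdK, h] : d K = d (K-1)) hchKp.2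
        · exact Finset.mem_singleton.mp h
      have hP1Kp : P1 K = {v₀ + Δ, c} := by rw [hchKp.1, hdK1, hdK]
      have hchKp' := hch' (K-1) (by omega)
      rw [hKK] at hchKp'
      have hd'K1 : d' (K-1) = c := by
        have hmemQ : d' (K-1) ∈ ({c, v₀ + Δ} : Finset ℝ) := by
          rw [← (hQ (K-1) le_rfl).2]; simp
        rcases Finset.mem_insert.mp hmemQ with h | h
        · exact h
        · exact absurd (by rw [hdK', Finset.mem_singleton.mp h] : d' K = d' (K-1)) hchKp'.2
      have hP2Kp : P2 K = {c, v₀ + Δ} := by rw [hchKp'.1, hd'K1, hdK']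
      have hcin : c + Δ ∈ P2 K := by
        rw [hPK2shift]
        apply Finset.mem_image_of_mem
        rw [hP1Kp]; simp
      rw [hP2Kp] at hcin
      rcases Finset.mem_insert.mp hcin with h | h
      · exact hΔ (by linarith)
      · have h' := Finset.mem_singleton.mp h
        rw [hvcd] at h'
        apply hΔ; linarith
    · -- (ii-a)
      have hA : v₀ + Δ ∈ (Bct (tf x') r).erase v₀ :=
        Finset.mem_erase.mpr ⟨by intro h; exact hΔ (by linarith), by rw [hσ2]; simp⟩
      have hBm : c + Δ ∈ (Bct (tf x') r).erase v₀ :=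
        Finset.mem_erase.mpr ⟨by intro h; apply hv2; rw [hσ2, ← h]; simp,
          by rw [hσ2]; simp⟩
      have hABne : v₀ + Δ ≠ c + Δ := by
        intro h
        exact hcv (by linarith)
      obtain ⟨dA, hsdA, hA0mem, hA0, hA0ne, hchA, hAK, hAmem⟩ :=
        fail_chain hP2card K (hfail2 _ hA)
      obtain ⟨dB, hsdB, hB0memB, hB0B, hB0neB, hchB, hBKe, hBmemB⟩ :=
        fail_chain hP2card K (hfail2 _ hBm)
      have hQ2 := chain_swap hABne K hA0 hB0B hA0ne hB0neB hchA hchB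
      have hall : ∀ k, k ≤ K → P2 k = {v₀ + Δ, c + Δ} := by
        intro k hk
        cases k with
        | zero =>
          have hdA0 : dA 0 = c + Δ := by
            have h1 : dA 0 ∈ ({v₀ + Δ, c + Δ} : Finset ℝ) := by
              rw [← (hQ2 0 (by omega)).2]; simp
            rcases Finset.mem_insert.mp h1 with h | h
            · exact absurd h hA0ne
            · exact Finset.mem_singleton.mp h
          rw [hA0, hdA0]
        | succ k =>
          have hc1 := hchA k (by omega)
          rw [hc1.1]
          exact pair_eq (fun hh => hc1.2 hh.symm) hABne
            (by rw [← (hQ2 k (by omega)).2]; simp)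
            (by rw [← (hQ2 (k+1) (by omega)).2]; simp)
      have hc0 : c ∈ P2 0 := by rw [← hPeq 0 (by omega)]; exact hcB0
      rw [hall 0 (by omega)] at hc0
      have hcval : c = v₀ + Δ := by
        rcases Finset.mem_insert.mp hc0 with h | h
        · exact h
        · exact absurd (Finset.mem_singleton.mp h) (by intro hh; exact hΔ (by linarith))
      have hchKp := hch (K-1) (by omega)
      rw [hKK] at hchKp
      have hP1Kp : P1 K = {d (K-1), c} := by rw [hchKp.1, hdK]
      have hP2KK : P2 K = {v₀ + Δ, c + Δ} := hall K le_rfl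
      have himg : (P1 K).image (· + Δ) = {v₀ + Δ, c + Δ} := by rw [← hPK2shift, hP2KK]
      rw [hP1Kp] at himg
      have hdin : d (K-1) + Δ ∈ ({v₀ + Δ, c + Δ} : Finset ℝ) := by
        rw [← himg]; exact Finset.mem_image_of_mem _ (by simp)
      have hdv : d (K-1) = v₀ ∨ d (K-1) = c := by
        rcases Finset.mem_insert.mp hdin with h | h
        · left; linarith
        · right; have h' := Finset.mem_singleton.mp h; linarith
      rcases hdv with h | h
      · have h1 : d (K-1) ∈ P1 (K-1) := hdmem (K-1) (by omega)
        rw [hPeq (K-1) (by omega), hall (K-1) (by omega), h] at h1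
        apply hv2; rw [hσ2]; exact h1
      · exact hchKp.2 (by rw [hdK, h])
  · -- case (i) : v₀ ∉ σ1
    have hm1 : c1 ∈ (Bct (tf x) r).erase v₀ :=
      Finset.mem_erase.mpr ⟨by intro h; apply hv1; rw [hσ1pair, ← h]; simp,
        by rw [hσ1pair]; simp⟩
    have hm2 : c2 ∈ (Bct (tf x) r).erase v₀ :=
      Finset.mem_erase.mpr ⟨by intro h; apply hv1; rw [hσ1pair, ← h]; simp,
        by rw [hσ1pair]; simp⟩
    obtain ⟨d1, hsd1, h10m, hB01, h10ne, hch1, h1K, h1mem⟩ := fail_chain hP1card K (hfail1 _ hm1)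
    obtain ⟨d2, hsd2, h20m, hB02, h20ne, hch2, h2K, h2mem⟩ := fail_chain hP1card K (hfail1 _ hm2)
    have hQ := chain_swap h12 K hB01 hB02 h10ne h20ne hch1 hch2
    have hall : ∀ k, k ≤ K → P1 k = {c1, c2} := by
      intro k hk
      cases k with
      | zero =>
        have hd10 : d1 0 = c2 := by
          have h1 : d1 0 ∈ ({c1, c2} : Finset ℝ) := by
            rw [← (hQ 0 (by omega)).2]; simp
          rcases Finset.mem_insert.mp h1 with h | h
          · exact absurd h h10ne
          · exact Finset.mem_singleton.mp h
        rw [hB01, hd10]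
      | succ k =>
        have hc1 := hch1 k (by omega)
        rw [hc1.1]
        exact pair_eq (fun hh => hc1.2 hh.symm) h12
          (by rw [← (hQ k (by omega)).2]; simp)
          (by rw [← (hQ (k+1) (by omega)).2]; simp)
    have hσ2p : Bct (tf x') r = {c1 + Δ, c2 + Δ} := by
      rw [hσshift, hσ1pair]
      simp
    have hsub : ∀ cc, cc ∈ (Bct (tf x') r).erase v₀ → cc ∈ ({c1, c2} : Finset ℝ) := by
      intro cc hcc
      obtain ⟨d', hsd', hc0', _⟩ := fail_chain hP2card K (hfail2 _ hcc)
      rw [← hPeq 0 (by omega), hall 0 (by omega)] at hc0'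
      exact hc0'
    have hv2 : v₀ ∈ Bct (tf x') r := by
      by_contra hv2
      have hsubs : Bct (tf x') r ⊆ Bct (tf x) r := by
        intro cc hcc
        rw [hσ1pair]
        exact hsub cc (Finset.mem_erase.mpr ⟨fun h => hv2 (h ▸ hcc), hcc⟩)
      have heq : Bct (tf x') r = Bct (tf x) r :=
        Finset.eq_of_subset_of_card_le hsubs (by rw [hBcard, hBcard])
      rw [hσshift] at heq
      exact shift_ne (Finset.card_pos.mp (by rw [hBcard]; omega)) hΔ heq
    have hpick : ∃ cb, cb ∈ ({c1, c2} : Finset ℝ) ∧ cb + Δ ≠ v₀ := by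
      rw [hσ2p] at hv2
      rcases Finset.mem_insert.mp hv2 with h | h
      · exact ⟨c2, by simp, by intro hh; rw [← hh] at h; exact h12 (by linarith)⟩
      · have h' := Finset.mem_singleton.mp h
        exact ⟨c1, by simp, by intro hh; rw [← hh] at h'; exact h12 (by linarith)⟩
    obtain ⟨cb, hcb, hcbv⟩ := hpick
    have hcbm : cb + Δ ∈ (Bct (tf x') r).erase v₀ :=
      Finset.mem_erase.mpr ⟨hcbv, by
        rw [hσ2p]
        rcases Finset.mem_insert.mp hcb with h | h
        · rw [h]; simp
        · rw [Finset.mem_singleton.mp h]; simp⟩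
    obtain ⟨d', hsd', hc0', hB0', hd0'ne, hch', hd'K, hd'mem⟩ :=
      fail_chain hP2card K (hfail2 _ hcbm)
    have hKK : K - 1 + 1 = K := by omega
    have hchKp' := hch' (K-1) (by omega)
    rw [hKK] at hchKp'
    have hP2Kp : P2 K = {d' (K-1), cb + Δ} := by rw [hchKp'.1, hd'K]
    have hP2KK : P2 K = {c1 + Δ, c2 + Δ} := by
      rw [hPK2shift, hall K le_rfl]
      simp
    have hv0in : v₀ ∈ ({d' (K-1), cb + Δ} : Finset ℝ) := by
      rw [← hP2Kp, hP2KK, ← hσ2p]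
      exact hv2
    rcases Finset.mem_insert.mp hv0in with h | h
    · have h1 : d' (K-1) ∈ P2 (K-1) := hd'mem (K-1) (by omega)
      rw [← hPeq (K-1) (by omega), hall (K-1) (by omega)] at h1
      apply hv1
      rw [hσ1pair, h]
      exact h1
    · exact hcbv (Finset.mem_singleton.mp h).symm

section Graph

open SimpleGraph

universe u
variable {V : Type u}

lemma sym2_exists_rep (e : Sym2 V) : ∃ a b, e = s(a, b) :=
  Sym2.ind (f := fun e => ∃ a b, e = s(a, b)) (fun a b => ⟨a, b, rfl⟩) e

lemma reach_comap {G : SimpleGraph V} {v : V} {a b : V} (p : G.Walk a b) :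
    (∀ x ∈ p.support, x ≠ v) →
    ∀ (ha : a ≠ v) (hb : b ≠ v),
      (G.comap (Subtype.val : {x : V // x ≠ v} → V)).Reachable ⟨a, ha⟩ ⟨b, hb⟩ := by
  induction p with
  | nil => exact fun _ ha hb => Reachable.refl _
  | @cons a c b h q ih =>
    intro hp ha hb
    have hc : c ≠ v := hp c (by
      rw [SimpleGraph.Walk.support_cons]
      exact List.mem_cons_of_mem _ q.start_mem_support)
    have hadj : (G.comap (Subtype.val : {x : V // x ≠ v} → V)).Adj ⟨a, ha⟩ ⟨c, hc⟩ := h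
    refine hadj.reachable.trans (ih ?_ hc hb)
    intro x hx
    exact hp x (by rw [SimpleGraph.Walk.support_cons]; exact List.mem_cons_of_mem _ hx)

lemma leaf_path_avoid [Fintype V] [DecidableEq V] {G : SimpleGraph V} [DecidableRel G.Adj]
    {v : V} (hdeg : G.degree v = 1) :
    ∀ {a b : V} (p : G.Walk a b), p.IsPath → a ≠ v → b ≠ v → ∀ x ∈ p.support, x ≠ v := by
  intro a b p
  induction p with
  | nil =>
    intro _ ha _ x hx
    rw [SimpleGraph.Walk.support_nil] at hx
    simp at hx
    rwa [hx]
  | @cons a c b h q ih =>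
    intro hp ha hb x hx
    rw [SimpleGraph.Walk.support_cons] at hx
    rcases List.mem_cons.mp hx with rfl | hx'
    · exact ha
    · by_cases hcv : c = v
      · subst hcv
        obtain ⟨hq, hanotin⟩ := (SimpleGraph.Walk.cons_isPath_iff h q).mp hp
        cases q with
        | nil => exact absurd rfl hb
        | @cons c d b h' q' =>
          exfalso
          have hd : d ∈ (SimpleGraph.Walk.cons h' q').support := by
            rw [SimpleGraph.Walk.support_cons]
            exact List.mem_cons_of_mem _ q'.start_mem_support
          have had : a ≠ d := fun hh => hanotin (hh ▸ hd)
          have hsub : ({a, d} : Finset V) ⊆ G.neighborFinset c := by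
            intro y hy
            rcases Finset.mem_insert.mp hy with rfl | hy'
            · rw [SimpleGraph.mem_neighborFinset]; exact h.symm
            · rw [Finset.mem_singleton.mp hy', SimpleGraph.mem_neighborFinset]; exact h'
          have h2 : ({a, d} : Finset V).card ≤ 1 := hdeg ▸ Finset.card_le_card hsub
          rw [Finset.card_pair had] at h2
          omega
      · exact ih (SimpleGraph.Walk.IsPath.of_cons hp) hcv hb x hx'

lemma edgeSet_comap_image (G : SimpleGraph V) (v : V) :
    Sym2.map (Subtype.val : {x : V // x ≠ v} → V) ''
      (G.comap (Subtype.val : {x : V // x ≠ v} → V)).edgeSet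
      = G.edgeSet \ G.incidenceSet v := by
  ext e
  constructor
  · rintro ⟨e', he', rfl⟩
    obtain ⟨a, b, rfl⟩ := sym2_exists_rep e'
    have hadj : G.Adj a.val b.val := he'
    rw [Sym2.map_pair_eq]
    refine ⟨hadj, ?_⟩
    rintro ⟨-, hv⟩
    rcases Sym2.mem_iff.mp hv with h | h
    · exact a.prop h.symm
    · exact b.prop h.symm
  · rintro ⟨he, hni⟩
    obtain ⟨a, b, rfl⟩ := sym2_exists_rep e
    have hadj : G.Adj a b := he
    have hav : a ≠ v := by
      rintro rfl
      exact hni ⟨he, Sym2.mem_mk_left _ _⟩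
    have hbv : b ≠ v := by
      rintro rfl
      exact hni ⟨he, Sym2.mem_mk_right _ _⟩
    exact ⟨s(⟨a, hav⟩, ⟨b, hbv⟩), hadj, by rw [Sym2.map_pair_eq]⟩

lemma incidence_comap (G : SimpleGraph V) {v u : V}
    (hvnb : ∀ y, G.Adj v y → y = u) {x : V} (hx : x ≠ v) (hxu : x ≠ u) :
    G.incidenceSet x =
      Sym2.map (Subtype.val : {y : V // y ≠ v} → V) ''
        ((G.comap (Subtype.val : {y : V // y ≠ v} → V)).incidenceSet ⟨x, hx⟩) := by
  ext e
  constructor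
  · rintro ⟨he, hxe⟩
    obtain ⟨a, b, rfl⟩ := sym2_exists_rep e
    have hadj : G.Adj a b := he
    have hav : a ≠ v := by
      rintro rfl
      rcases Sym2.mem_iff.mp hxe with h | h
      · exact hx h
      · exact hxu (h.trans (hvnb b hadj))
    have hbv : b ≠ v := by
      rintro rfl
      rcases Sym2.mem_iff.mp hxe with h | h
      · exact hxu (h.trans (hvnb a hadj.symm))
      · exact hx h
    refine ⟨s(⟨a, hav⟩, ⟨b, hbv⟩), ⟨hadj, ?_⟩, by rw [Sym2.map_pair_eq]⟩
    rcases Sym2.mem_iff.mp hxe with h | h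
    · rw [Sym2.mem_iff]; left; exact Subtype.ext h
    · rw [Sym2.mem_iff]; right; exact Subtype.ext h
  · rintro ⟨e', ⟨he', hxe'⟩, rfl⟩
    obtain ⟨a, b, rfl⟩ := sym2_exists_rep e'
    have hadj : G.Adj a.val b.val := he'
    rw [Sym2.map_pair_eq]
    refine ⟨hadj, ?_⟩
    rcases Sym2.mem_iff.mp hxe' with h | h
    · rw [Sym2.mem_iff]; left; exact congrArg Subtype.val h
    · rw [Sym2.mem_iff]; right; exact congrArg Subtype.val h

lemma incidence_comap_u (G : SimpleGraph V) {v u : V} (hadjvu : G.Adj v u)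
    (hvnb : ∀ y, G.Adj v y → y = u) (huv : u ≠ v) :
    G.incidenceSet u =
      insert s(v, u) (Sym2.map (Subtype.val : {y : V // y ≠ v} → V) ''
        ((G.comap (Subtype.val : {y : V // y ≠ v} → V)).incidenceSet ⟨u, huv⟩)) := by
  ext e
  constructor
  · rintro ⟨he, hue⟩
    obtain ⟨a, b, rfl⟩ := sym2_exists_rep e
    have hadj : G.Adj a b := he
    by_cases hve : v ∈ s(a, b)
    · left
      exact (Sym2.mem_and_mem_iff (Ne.symm huv)).mp ⟨hve, hue⟩
    · right
      have hav : a ≠ v := fun h => hve (h ▸ Sym2.mem_mk_left _ _)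
      have hbv : b ≠ v := fun h => hve (h ▸ Sym2.mem_mk_right _ _)
      refine ⟨s(⟨a, hav⟩, ⟨b, hbv⟩), ⟨hadj, ?_⟩, by rw [Sym2.map_pair_eq]⟩
      rcases Sym2.mem_iff.mp hue with h | h
      · rw [Sym2.mem_iff]; left; exact Subtype.ext h
      · rw [Sym2.mem_iff]; right; exact Subtype.ext h
  · rintro (rfl | ⟨e', ⟨he', hue'⟩, rfl⟩)
    · exact ⟨hadjvu, Sym2.mem_mk_right _ _⟩
    · obtain ⟨a, b, rfl⟩ := sym2_exists_rep e'
      have hadj : G.Adj a.val b.val := he'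
      rw [Sym2.map_pair_eq]
      refine ⟨hadj, ?_⟩
      rcases Sym2.mem_iff.mp hue' with h | h
      · rw [Sym2.mem_iff]; left; exact congrArg Subtype.val h
      · rw [Sym2.mem_iff]; right; exact congrArg Subtype.val h

lemma two_regular_cycle [Fintype V] [DecidableEq V] (G : SimpleGraph V) [DecidableRel G.Adj]
    (hconn : G.Connected) (hdeg2 : ∀ x, G.degree x = 2) (hn3 : 3 ≤ Fintype.card V) :
    ∃ f : ℕ → V,
      (∀ k, G.Adj (f k) (f (k+1))) ∧
      (∀ k, G.neighborFinset (f (k+1)) = {f k, f (k+2)}) ∧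
      (∀ i j, i < j → j < Fintype.card V → f i ≠ f j) ∧
      (∀ k, f (k + Fintype.card V) = f k) ∧
      (∀ x, ∃ k, k < Fintype.card V ∧ f k = x) := by
  classical
  set n := Fintype.card V with hn
  have hnb2 : ∀ x y : V, ∃ z, G.Adj x y →
      (G.Adj x z ∧ z ≠ y ∧ ∀ z', G.Adj x z' → z' = y ∨ z' = z) := by
    intro x y
    by_cases hxy : G.Adj x y
    swap
    · exact ⟨x, fun h => absurd h hxy⟩
    obtain ⟨a, b, hab, hnf⟩ := Finset.card_eq_two.mp (hdeg2 x)
    have hmemnb : ∀ z', G.Adj x z' → z' = a ∨ z' = b := by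
      intro z' hz'
      have h1 : z' ∈ G.neighborFinset x := (SimpleGraph.mem_neighborFinset _ _ _).mpr hz'
      rw [hnf] at h1
      rcases Finset.mem_insert.mp h1 with h | h
      · exact Or.inl h
      · exact Or.inr (Finset.mem_singleton.mp h)
    have hadja : G.Adj x a := by
      have h1 : a ∈ G.neighborFinset x := by rw [hnf]; simp
      rwa [SimpleGraph.mem_neighborFinset] at h1
    have hadjb : G.Adj x b := by
      have h1 : b ∈ G.neighborFinset x := by rw [hnf]; simp
      rwa [SimpleGraph.mem_neighborFinset] at h1
    rcases hmemnb y hxy with rfl | rfl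
    · exact ⟨b, fun _ => ⟨hadjb, Ne.symm hab, fun z' hz' => hmemnb z' hz'⟩⟩
    · exact ⟨a, fun _ => ⟨hadja, hab, fun z' hz' => (hmemnb z' hz').symm⟩⟩
  choose oth hoth using hnb2
  obtain ⟨v1⟩ := hconn.nonempty
  have hd1 : 0 < G.degree v1 := by rw [hdeg2]; omega
  obtain ⟨v2, h12⟩ := (G.degree_pos_iff_exists_adj v1).mp hd1
  let T := {p : V × V // G.Adj p.1 p.2}
  let step : T → T := fun p => ⟨(p.val.2, oth p.val.2 p.val.1), (hoth _ _ p.prop.symm).1⟩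
  let Fs : ℕ → T := fun k => step^[k] ⟨(v1, v2), h12⟩
  set f : ℕ → V := fun k => (Fs k).val.1 with hf
  have hFs : ∀ k, Fs (k+1) = step (Fs k) := fun k => Function.iterate_succ_apply' step k _
  have hsnd : ∀ k, (Fs k).val.2 = f (k+1) := by
    intro k
    show (Fs k).val.2 = (Fs (k+1)).val.1
    rw [hFs k]
  have hadjf : ∀ k, G.Adj (f k) (f (k+1)) := by
    intro k
    have h1 := (Fs k).prop
    rwa [hsnd k] at h1
  have hstep : ∀ k, f (k+2) = oth (f (k+1)) (f k) := by
    intro k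
    have h1 : f (k + 2) = (step (Fs (k+1))).val.1 := by
      show (Fs (k+2)).val.1 = _
      rw [hFs (k+1)]
    rw [h1]
    show (Fs (k+1)).val.2 = _
    rw [hFs k]
    show oth ((Fs k).val.2) ((Fs k).val.1) = _
    rw [hsnd k]
  have hoth_eq : ∀ (x y : V), G.Adj x y → ∀ (z : V), G.Adj x z → z ≠ y → z = oth x y := by
    intro x y h z hz hzy
    rcases (hoth x y h).2.2 z hz with h1 | h1
    · exact absurd h1 hzy
    · exact h1
  have hne2 : ∀ k, f (k+2) ≠ f k := by
    intro k
    rw [hstep k]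
    exact (hoth _ _ (hadjf k).symm).2.1
  have hnbf : ∀ k, G.neighborFinset (f (k+1)) = {f k, f (k+2)} := by
    intro k
    refine (Finset.eq_of_subset_of_card_le ?_ ?_).symm
    · intro y hy
      rcases Finset.mem_insert.mp hy with rfl | hy'
      · exact (SimpleGraph.mem_neighborFinset _ _ _).mpr (hadjf k).symm
      · rw [Finset.mem_singleton.mp hy']
        exact (SimpleGraph.mem_neighborFinset _ _ _).mpr (hadjf (k+1))
    · rw [Finset.card_pair (Ne.symm (hne2 k))]
      exact le_of_eq (hdeg2 _)
  have hrep : ∃ b, b ≤ n ∧ ∃ a, a < b ∧ f a = f b := by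
    have h1 : ¬ Function.Injective (fun i : Fin (n+1) => f i.val) := by
      intro hinj
      have h2 := Fintype.card_le_of_injective _ hinj
      rw [Fintype.card_fin] at h2
      omega
    rw [Function.not_injective_iff] at h1
    obtain ⟨i, j, hij, hne⟩ := h1
    have hi := i.isLt
    have hj := j.isLt
    rcases Nat.lt_or_ge i.val j.val with h | h
    · exact ⟨j.val, by omega, i.val, h, hij⟩
    · have h2 : j.val < i.val := by
        rcases Nat.lt_or_ge j.val i.val with h2 | h2
        · exact h2
        · exact absurd (Fin.ext (by omega)) hne
      exact ⟨i.val, by omega, j.val, h2, hij.symm⟩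
  have hPex : ∃ b, ∃ a, a < b ∧ f a = f b := by
    obtain ⟨b, _, hb⟩ := hrep
    exact ⟨b, hb⟩
  set N := Nat.find hPex with hNdef
  obtain ⟨a₀, ha₀N, ha₀⟩ := Nat.find_spec hPex
  have hNle : N ≤ n := by
    obtain ⟨b, hbn, hb⟩ := hrep
    exact le_trans (Nat.find_min' hPex hb) hbn
  have hinj : ∀ i j, i < j → j < N → f i ≠ f j := by
    intro i j hij hjN hfe
    exact Nat.find_min hPex hjN ⟨i, hij, hfe⟩
  have ha00 : a₀ = 0 := by
    by_contra ha0ne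
    have hNa2 : a₀ + 2 ≤ N := by
      rcases Nat.lt_or_ge (a₀ + 1) N with h | h
      · omega
      · exfalso
        have hNeq : N = a₀ + 1 := by omega
        have h2 := hadjf a₀
        rw [show a₀ + 1 = N from by omega, ← ha₀] at h2
        exact G.loopless.irrefl _ h2
    obtain ⟨j, rfl⟩ : ∃ j, a₀ = j + 1 := ⟨a₀ - 1, by omega⟩
    obtain ⟨k, hk⟩ : ∃ k, N = k + 1 := ⟨N - 1, by omega⟩
    have h1 : f k ∈ G.neighborFinset (f (j+1)) := by
      have h2 := hadjf k
      rw [← hk, ← ha₀] at h2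
      exact (SimpleGraph.mem_neighborFinset _ _ _).mpr h2.symm
    rw [hnbf j] at h1
    rcases Finset.mem_insert.mp h1 with h2 | h2
    · exact hinj j k (by omega) (by omega) h2.symm
    · have h3 := Finset.mem_singleton.mp h2
      rcases Nat.lt_or_ge (j+2) k with h4 | h4
      · exact hinj (j+2) k h4 (by omega) h3.symm
      · have h5 : f (j+1+2) = f (j+1) := by
          rw [show j+1+2 = N from by omega, ← ha₀]
        exact hne2 (j+1) h5
  rw [ha00] at ha₀
  have hN3 : 3 ≤ N := by
    have h0 : 0 < N := by omega
    have h1 : N ≠ 1 := by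
      intro h
      have h2 := hadjf 0
      rw [show (0:ℕ)+1 = N from by omega, ← ha₀] at h2
      exact G.loopless.irrefl _ h2
    have h2 : N ≠ 2 := by
      intro h
      apply hne2 0
      rw [show (0:ℕ)+2 = N from by omega, ← ha₀]
    omega
  have hper1 : f (N + 1) = f 1 := by
    obtain ⟨k, hk⟩ : ∃ k, N = k + 1 := ⟨N - 1, by omega⟩
    have h1 := hnbf k
    have hm1 : f 1 ∈ G.neighborFinset (f (k+1)) := by
      rw [← hk, ← ha₀]
      exact (SimpleGraph.mem_neighborFinset _ _ _).mpr (hadjf 0)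
    rw [h1] at hm1
    rcases Finset.mem_insert.mp hm1 with h2 | h2
    · exact absurd h2 (hinj 1 k (by omega) (by omega))
    · have h3 := Finset.mem_singleton.mp h2
      rw [show N + 1 = k + 2 from by omega]
      exact h3.symm
  have hpair : ∀ k, f (k + N) = f k ∧ f (k + N + 1) = f (k + 1) := by
    intro k
    induction k with
    | zero => exact ⟨by simpa using ha₀.symm, by simpa using hper1⟩
    | succ k ih =>
      constructor
      · rw [show k+1+N = k+N+1 from by omega]
        exact ih.2
      · have e2 : f (k+2) = oth (f (k+1)) (f k) := hstep k
        have e3 : f (k+N+2) = oth (f (k+1)) (f k) := by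
          apply hoth_eq _ _ (hadjf k).symm
          · have h4 := hadjf (k+N+1)
            rw [show k+N+1+1 = k+N+2 from by omega, ih.2] at h4
            exact h4
          · rw [← ih.1]
            exact hne2 (k+N)
        rw [show k+1+N+1 = k+N+2 from by omega, show k+1+1 = k+2 from by omega, e3, e2]
  have hper : ∀ k, f (k + N) = f k := fun k => (hpair k).1
  have hmod : ∀ k, f k = f (k % N) := by
    intro k
    induction k using Nat.strong_induction_on with
    | _ k ih =>
      rcases Nat.lt_or_ge k N with h | h
      · rw [Nat.mod_eq_of_lt h]
      · rw [Nat.mod_eq_sub_mod h, ← ih (k - N) (by omega)]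
        conv_lhs => rw [show k = (k - N) + N from by omega]
        rw [hper (k - N)]
  have hDclosed : ∀ x y, G.Adj x y → (∃ k, f k = x) → ∃ k, f k = y := by
    rintro x y hxy ⟨k, rfl⟩
    obtain ⟨j, hj⟩ : ∃ j, k + N = j + 1 := ⟨k + N - 1, by omega⟩
    have h1 : y ∈ G.neighborFinset (f (j+1)) := by
      rw [← hj, hper k]
      exact (SimpleGraph.mem_neighborFinset _ _ _).mpr hxy
    rw [hnbf j] at h1
    rcases Finset.mem_insert.mp h1 with h2 | h2
    · exact ⟨j, h2.symm⟩
    · exact ⟨j + 2, (Finset.mem_singleton.mp h2).symm⟩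
  have hwalk : ∀ (a b : V) (p : G.Walk a b), (∃ k, f k = a) → ∃ k, f k = b := by
    intro a b p
    induction p with
    | nil => exact id
    | cons h q ih => exact fun ha => ih (hDclosed _ _ h ha)
  have hsurj : ∀ x, ∃ k, f k = x := by
    intro x
    obtain ⟨p⟩ := hconn.preconnected (f 0) x
    exact hwalk _ _ p ⟨0, rfl⟩
  have hsurjN : ∀ x, ∃ k, k < N ∧ f k = x := by
    intro x
    obtain ⟨k, hk⟩ := hsurj x
    exact ⟨k % N, Nat.mod_lt _ (by omega), by rw [← hmod k, hk]⟩
  have hNn : N = n := by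
    have hge : n ≤ N := by
      have h1 : Finset.univ ⊆ (Finset.range N).image f := by
        intro x _
        obtain ⟨k, hkN, hk⟩ := hsurjN x
        exact Finset.mem_image.mpr ⟨k, Finset.mem_range.mpr hkN, hk⟩
      have h2 := Finset.card_le_card h1
      rw [Finset.card_univ] at h2
      have h3 := Finset.card_image_le (f := f) (s := Finset.range N)
      rw [Finset.card_range] at h3
      have h4 : Fintype.card V = n := hn.symm
      omega
    omega
  rw [← hNn]
  exact ⟨f, hadjf, hnbf, hinj, hper, hsurjN⟩

end Graph

section Main

open SimpleGraph

universe u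

lemma pick_avoid (s : Finset ℝ) (hs : s.card = 2) (k X : ℝ) : ∃ c ∈ s, c + k ≠ X := by
  obtain ⟨p, q, hpq, rfl⟩ := Finset.card_eq_two.mp hs
  by_cases h1 : p + k ≠ X
  · exact ⟨p, by simp, h1⟩
  · push_neg at h1
    exact ⟨q, by simp, fun h2 => hpq (by linarith)⟩

theorem mainP : ∀ (n : ℕ) (V : Type u) [Fintype V] [DecidableEq V] (G : SimpleGraph V),
    Fintype.card V = n → G.Connected → G.edgeSet.ncard = n →
    ∀ (Lv : V → Finset ℝ) (Le : Sym2 V → Finset ℝ),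
      (∀ x, (Lv x).card = 2) → (∀ e ∈ G.edgeSet, (Le e).card = 2) →
      ∀ (w : V → ℝ) (r : V) (v₀ : ℝ),
      ∃ (fv : V → ℝ) (fe : Sym2 V → ℝ),
        (∀ x, fv x ∈ Lv x) ∧ (∀ e ∈ G.edgeSet, fe e ∈ Le e) ∧
        (∀ a b, G.Adj a b →
          fv a + w a + ∑ᶠ e ∈ G.incidenceSet a, fe e ≠
          fv b + w b + ∑ᶠ e ∈ G.incidenceSet b, fe e) ∧
        fv r + w r + ∑ᶠ e ∈ G.incidenceSet r, fe e ≠ v₀ := by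
  intro n
  induction n using Nat.strong_induction_on with
  | _ n IH =>
  intro V _ _ G hcard hconn huni Lv Le hLv hLe w r v₀
  classical
  have hnedge : ∀ e ∈ G.edgeSet, ∃ a b, a ≠ b ∧ e = s(a, b) := by
    intro e he
    obtain ⟨a, b, rfl⟩ := sym2_exists_rep e
    have hadj : G.Adj a b := he
    exact ⟨a, b, hadj.ne, rfl⟩
  have hn3 : 3 ≤ n := by
    have hn0 : 0 < n := by
      rw [← hcard]
      exact Fintype.card_pos_iff.mpr hconn.nonempty
    obtain ⟨e, he⟩ : ∃ e, e ∈ G.edgeSet := by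
      have h1 : 0 < G.edgeSet.ncard := by omega
      exact (Set.ncard_pos (G.edgeSet.toFinite)).mp h1
    obtain ⟨a, b, hab, rfl⟩ := hnedge e he
    have hn2 : 2 ≤ n := by
      rw [← hcard]
      exact Fintype.one_lt_card_iff_nontrivial.mpr ⟨a, b, hab⟩
    by_contra hlt
    have hn2' : n = 2 := by omega
    rw [hn2'] at hcard huni
    obtain ⟨e1, e2, he12, hE⟩ := Set.ncard_eq_two.mp huni
    have he1 : e1 ∈ G.edgeSet := by rw [hE]; exact Set.mem_insert _ _
    have he2 : e2 ∈ G.edgeSet := by rw [hE]; exact Set.mem_insert_of_mem _ rfl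
    obtain ⟨a1, b1, hab1, rfl⟩ := hnedge e1 he1
    obtain ⟨a2, b2, hab2, rfl⟩ := hnedge e2 he2
    have huniv : ∀ z : V, z = a1 ∨ z = b1 := by
      have h1 : ({a1, b1} : Finset V) = Finset.univ :=
        Finset.eq_univ_of_card _ (by rw [Finset.card_pair hab1, hcard])
      intro z
      have h2 : z ∈ ({a1, b1} : Finset V) := h1 ▸ Finset.mem_univ z
      rcases Finset.mem_insert.mp h2 with h | h
      · exact Or.inl h
      · exact Or.inr (Finset.mem_singleton.mp h)
    apply he12
    rcases huniv a2 with rfl | rfl <;> rcases huniv b2 with rfl | rfl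
    · exact absurd rfl hab2
    · rfl
    · exact Sym2.eq_swap
    · exact absurd rfl hab2
  by_cases hleaf : ∃ v, G.degree v = 1
  · -- leaf case
    obtain ⟨v, hdeg⟩ := hleaf
    have hnf1 : (G.neighborFinset v).card = 1 := hdeg
    obtain ⟨u, hnb⟩ := Finset.card_eq_one.mp hnf1
    have hadjvu : G.Adj v u := by
      have h1 : u ∈ G.neighborFinset v := by rw [hnb]; simp
      rwa [SimpleGraph.mem_neighborFinset] at h1
    have huv : u ≠ v := hadjvu.ne'
    have hvnb : ∀ y, G.Adj v y → y = u := by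
      intro y hy
      have h1 : y ∈ G.neighborFinset v := (SimpleGraph.mem_neighborFinset _ _ _).mpr hy
      rw [hnb] at h1
      exact Finset.mem_singleton.mp h1
    have hpendE : s(v, u) ∈ G.edgeSet := hadjvu
    have hpend : G.incidenceSet v = {s(v, u)} := by
      ext e
      constructor
      · rintro ⟨he, hv⟩
        obtain ⟨a, b, hab, rfl⟩ := hnedge e he
        have hadj : G.Adj a b := he
        rcases Sym2.mem_iff.mp hv with h | h
        · have hb : G.Adj v b := by rw [h]; exact hadj
          rw [Set.mem_singleton_iff, ← h, hvnb b hb]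
        · have ha : G.Adj v a := by rw [h]; exact hadj.symm
          rw [Set.mem_singleton_iff, ← h, hvnb a ha]
          exact Sym2.eq_swap
      · intro h
        rw [Set.mem_singleton_iff] at h
        rw [h]
        exact ⟨hpendE, Sym2.mem_mk_left _ _⟩
    set V' := {x : V // x ≠ v} with hV'
    set G' := G.comap (Subtype.val : V' → V) with hG'
    have hval_inj : Function.Injective (Subtype.val : V' → V) := Subtype.val_injective
    have hcard' : Fintype.card V' = n - 1 := by
      have h1 : Fintype.card {x : V // x = v} = 1 := Fintype.card_subtype_eq v
      have h2 := Fintype.card_subtype_compl (fun x : V => x = v)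
      rw [h1, hcard] at h2
      exact h2
    have hconn' : G'.Connected := by
      rw [SimpleGraph.connected_iff]
      refine ⟨?_, ⟨⟨u, huv⟩⟩⟩
      intro a b
      obtain ⟨q⟩ := hconn.preconnected a.val b.val
      have havoid := leaf_path_avoid hdeg q.toPath.val q.toPath.prop a.prop b.prop
      exact reach_comap q.toPath.val havoid a.prop b.prop
    have hedge' : G'.edgeSet.ncard = n - 1 := by
      have h1 : (G.edgeSet \ G.incidenceSet v).ncard = n - 1 := by
        rw [Set.ncard_diff (G.incidenceSet_subset v), huni, hpend, Set.ncard_singleton]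
      have h2 := edgeSet_comap_image G v
      rw [← h2, Set.ncard_image_of_injective _ (Sym2.map.injective hval_inj)] at h1
      exact h1
    set Lv' : V' → Finset ℝ := fun x => Lv x.val with hLv'
    set Le' : Sym2 V' → Finset ℝ := fun e => Le (Sym2.map Subtype.val e) with hLe'
    have hmapE : ∀ e ∈ G'.edgeSet, Sym2.map Subtype.val e ∈ G.edgeSet := by
      intro e he
      have h2 : Sym2.map Subtype.val e ∈ G.edgeSet \ G.incidenceSet v := by
        rw [← edgeSet_comap_image G v]
        exact Set.mem_image_of_mem _ he
      exact h2.1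
    have hLv'c : ∀ x, (Lv' x).card = 2 := fun x => hLv _
    have hLe'c : ∀ e ∈ G'.edgeSet, (Le' e).card = 2 := fun e he => hLe _ (hmapE e he)
    obtain ⟨tc, htc⟩ : ∃ tc, tc ∈ Le s(v, u) :=
      Finset.card_pos.mp (by rw [hLe _ hpendE]; omega)
    set w' : V' → ℝ := fun x => w x.val + (if x.val = u then tc else 0) with hw'
    have hIH := IH (n-1) (by omega) V' G' hcard' hconn' hedge' Lv' Le' hLv'c hLe'c w'
    have hbuild : ∀ (cv : ℝ) (fv' : V' → ℝ) (fe' : Sym2 V' → ℝ),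
        cv ∈ Lv v →
        (∀ x, fv' x ∈ Lv' x) → (∀ e ∈ G'.edgeSet, fe' e ∈ Le' e) →
        (∀ a b, G'.Adj a b →
          fv' a + w' a + ∑ᶠ e ∈ G'.incidenceSet a, fe' e ≠
          fv' b + w' b + ∑ᶠ e ∈ G'.incidenceSet b, fe' e) →
        (cv + w v + tc ≠
          fv' ⟨u, huv⟩ + w' ⟨u, huv⟩ + ∑ᶠ e ∈ G'.incidenceSet ⟨u, huv⟩, fe' e) →
        ∃ (fv : V → ℝ) (fe : Sym2 V → ℝ),
          (∀ x, fv x ∈ Lv x) ∧ (∀ e ∈ G.edgeSet, fe e ∈ Le e) ∧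
          (∀ a b, G.Adj a b →
            fv a + w a + ∑ᶠ e ∈ G.incidenceSet a, fe e ≠
            fv b + w b + ∑ᶠ e ∈ G.incidenceSet b, fe e) ∧
          (∀ (x : V'), fv x.val + w x.val + ∑ᶠ e ∈ G.incidenceSet x.val, fe e
             = fv' x + w' x + ∑ᶠ e ∈ G'.incidenceSet x, fe' e) ∧
          (fv v + w v + ∑ᶠ e ∈ G.incidenceSet v, fe e = cv + w v + tc) := by
      intro cv fv' fe' hcv hfv' hfe' hcons' hune
      set ι : V → V' := fun x => if h : x = v then ⟨u, huv⟩ else ⟨x, h⟩ with hι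
      have hιval : ∀ (x : V'), ι x.val = x := by
        intro x
        simp only [hι]
        rw [dif_neg x.prop]
      set fv : V → ℝ := fun x => if h : x = v then cv else fv' ⟨x, h⟩ with hfv
      set fe : Sym2 V → ℝ := fun e => if v ∈ e then tc else fe' (Sym2.map ι e) with hfe
      have hfe_map : ∀ e' : Sym2 V', fe (Sym2.map Subtype.val e') = fe' e' := by
        intro e'
        obtain ⟨a, b, rfl⟩ := sym2_exists_rep e'
        have hvnot : v ∉ s(a.val, b.val) := by
          intro h
          rcases Sym2.mem_iff.mp h with h1 | h1
          · exact a.prop h1.symm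
          · exact b.prop h1.symm
        rw [Sym2.map_pair_eq]
        simp only [hfe]
        rw [if_neg hvnot, Sym2.map_pair_eq, hιval a, hιval b]
      have hfvval : ∀ x : V', fv x.val = fv' x := by
        intro x
        simp only [hfv]
        rw [dif_neg x.prop]
      have hfvmem : ∀ x, fv x ∈ Lv x := by
        intro x
        by_cases hx : x = v
        · simp only [hfv]
          rw [dif_pos hx, hx]
          exact hcv
        · simp only [hfv]
          rw [dif_neg hx]
          exact hfv' ⟨x, hx⟩
      have hfemem : ∀ e ∈ G.edgeSet, fe e ∈ Le e := by
        intro e he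
        by_cases hv : v ∈ e
        · have he2 : e = s(v, u) := by
            have h1 : e ∈ G.incidenceSet v := ⟨he, hv⟩
            rwa [hpend, Set.mem_singleton_iff] at h1
          simp only [hfe]
          rw [if_pos hv, he2]
          exact htc
        · have h2 : e ∈ G.edgeSet \ G.incidenceSet v := ⟨he, fun hin => hv hin.2⟩
          rw [← edgeSet_comap_image G v] at h2
          obtain ⟨e', he', rfl⟩ := h2
          rw [hfe_map e']
          exact hfe' e' he'
      have hinjon : ∀ s : Set (Sym2 V'), Set.InjOn (Sym2.map (Subtype.val : V' → V)) s :=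
        fun s => (Sym2.map.injective hval_inj).injOn
      have hsum : ∀ x : V',
          (∑ᶠ e ∈ G.incidenceSet x.val, fe e)
            = (∑ᶠ e ∈ G'.incidenceSet x, fe' e) + (if x.val = u then tc else 0) := by
        rintro ⟨xv, hxv⟩
        by_cases hxu : xv = u
        · subst hxu
          have hueq : G.incidenceSet xv =
              insert s(v, xv) (Sym2.map (Subtype.val : V' → V) ''
                (G'.incidenceSet ⟨xv, hxv⟩)) := incidence_comap_u G hadjvu hvnb hxv
          rw [hueq]
          have hnotmem : s(v, xv) ∉
              Sym2.map (Subtype.val : V' → V) '' (G'.incidenceSet ⟨xv, hxv⟩) := by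
            rintro ⟨e', he', heq⟩
            obtain ⟨a, b, rfl⟩ := sym2_exists_rep e'
            rw [Sym2.map_pair_eq] at heq
            have hvmem : v ∈ s(a.val, b.val) := by rw [heq]; exact Sym2.mem_mk_left _ _
            rcases Sym2.mem_iff.mp hvmem with h1 | h1
            · exact a.prop h1.symm
            · exact b.prop h1.symm
          rw [finsum_mem_insert fe hnotmem (Set.toFinite _)]
          have hfepend : fe s(v, xv) = tc := by
            simp only [hfe]
            rw [if_pos (Sym2.mem_mk_left _ _)]
          rw [hfepend, finsum_mem_image (hinjon _),
            finsum_mem_congr rfl (fun e' _ => hfe_map e'), if_pos rfl]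
          ring
        · rw [incidence_comap G hvnb hxv hxu, finsum_mem_image (hinjon _),
            finsum_mem_congr rfl (fun e' _ => hfe_map e'), if_neg hxu]
          ring
      have hSeq : ∀ x : V',
          fv x.val + w x.val + ∑ᶠ e ∈ G.incidenceSet x.val, fe e
            = fv' x + w' x + ∑ᶠ e ∈ G'.incidenceSet x, fe' e := by
        intro x
        rw [hsum x, hfvval x]
        simp only [hw']
        ring
      have hSv : fv v + w v + ∑ᶠ e ∈ G.incidenceSet v, fe e = cv + w v + tc := by
        rw [hpend, finsum_mem_singleton]
        have h1 : fe s(v, u) = tc := by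
          simp only [hfe]
          rw [if_pos (Sym2.mem_mk_left _ _)]
        have h2 : fv v = cv := by simp [hfv]
        rw [h1, h2]
      refine ⟨fv, fe, hfvmem, hfemem, ?_, hSeq, hSv⟩
      intro a b hab
      by_cases hav : a = v
      · subst hav
        have hbu : b = u := hvnb b hab
        subst hbu
        rw [hSv, hSeq ⟨b, huv⟩]
        exact hune
      · by_cases hbv : b = v
        · subst hbv
          have hau : a = u := hvnb a hab.symm
          subst hau
          rw [hSv, hSeq ⟨a, huv⟩]
          exact fun h => hune h.symm
        · have hadj' : G'.Adj ⟨a, hav⟩ ⟨b, hbv⟩ := hab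
          rw [hSeq ⟨a, hav⟩, hSeq ⟨b, hbv⟩]
          exact hcons' _ _ hadj'
    by_cases hrv : r = v
    · obtain ⟨cv, hcv, hne0⟩ := pick_avoid (Lv v) (hLv v) (w v + tc) v₀
      have hcvne : cv + w v + tc ≠ v₀ := fun h => hne0 (by linarith)
      obtain ⟨fv', fe', hfv', hfe', hcons', havoid'⟩ :=
        hIH ⟨u, huv⟩ (cv + w v + tc)
      obtain ⟨fv, fe, h1, h2, h3, hSeq, hSv⟩ :=
        hbuild cv fv' fe' hcv hfv' hfe' hcons' (fun h => havoid' h.symm)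
      refine ⟨fv, fe, h1, h2, h3, ?_⟩
      rw [hrv, hSv]
      exact hcvne
    · obtain ⟨fv', fe', hfv', hfe', hcons', havoid'⟩ := hIH ⟨r, hrv⟩ v₀
      obtain ⟨cv, hcv, hne0⟩ := pick_avoid (Lv v) (hLv v) (w v + tc)
        (fv' ⟨u, huv⟩ + w' ⟨u, huv⟩ + ∑ᶠ e ∈ G'.incidenceSet ⟨u, huv⟩, fe' e)
      have hcvne : cv + w v + tc ≠
          fv' ⟨u, huv⟩ + w' ⟨u, huv⟩ + ∑ᶠ e ∈ G'.incidenceSet ⟨u, huv⟩, fe' e :=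
        fun h => hne0 (by linarith)
      obtain ⟨fv, fe, h1, h2, h3, hSeq, hSv⟩ := hbuild cv fv' fe' hcv hfv' hfe' hcons' hcvne
      refine ⟨fv, fe, h1, h2, h3, ?_⟩
      rw [hSeq ⟨r, hrv⟩]
      exact havoid'

  · -- base case : no leaf, 2-regular, cycle
    push_neg at hleaf
    have hdegpos : ∀ x, 0 < G.degree x := by
      intro x
      obtain ⟨y, hy⟩ := Fintype.exists_ne_of_one_lt_card (by rw [hcard]; omega) x
      obtain ⟨p⟩ := hconn.preconnected x y
      cases p with
      | nil => exact absurd rfl hy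
      | cons h q => exact (G.degree_pos_iff_exists_adj x).mpr ⟨_, h⟩
    have hdeg2 : ∀ x, G.degree x = 2 := by
      have hsum : ∑ x : V, G.degree x = 2 * n := by
        rw [SimpleGraph.sum_degrees_eq_twice_card_edges]
        congr 1
        rw [← huni, Set.ncard_eq_toFinset_card']
        congr 1
      have hge : ∀ x, 2 ≤ G.degree x := by
        intro x
        have h1 := hdegpos x
        have h2 : G.degree x ≠ 1 := hleaf x
        omega
      intro x
      by_contra hne
      have h3 : 3 ≤ G.degree x := by have := hge x; omega
      have h5 : ∑ _y : V, 2 < ∑ y : V, G.degree y :=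
        Finset.sum_lt_sum (fun i _ => hge i) ⟨x, Finset.mem_univ x, by omega⟩
      rw [Finset.sum_const, Finset.card_univ, hcard, smul_eq_mul] at h5
      omega
    obtain ⟨f, hadjf, hnbf, hinj, hper, hsurj⟩ :=
      two_regular_cycle G hconn hdeg2 (by rw [hcard]; exact hn3)
    rw [hcard] at hinj hper hsurj
    haveI : NeZero n := ⟨by omega⟩
    set φ : ZMod n → V := fun z => f (ZMod.val z) with hφ
    have hcastval : ∀ z : ZMod n, ((z.val : ℕ) : ZMod n) = z := fun z => by
      rw [ZMod.natCast_val, ZMod.cast_id]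
    have hvalcast : ∀ k : ℕ, ((k : ZMod n)).val = k % n := fun k => ZMod.val_natCast n k
    have hmodper : ∀ k : ℕ, f (k % n) = f k := by
      intro k
      induction k using Nat.strong_induction_on with
      | _ k ih =>
        rcases Nat.lt_or_ge k n with h | h
        · rw [Nat.mod_eq_of_lt h]
        · rw [Nat.mod_eq_sub_mod h, ih (k - n) (by omega)]
          conv_rhs => rw [show k = (k - n) + n from by omega]
          rw [hper (k - n)]
    have hφnat : ∀ k : ℕ, φ (k : ZMod n) = f k := by
      intro k
      simp only [hφ]
      rw [hvalcast, hmodper]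
    have hφsucc : ∀ z : ZMod n, φ (z + 1) = f (z.val + 1) := by
      intro z
      conv_lhs => rw [← hcastval z]
      rw [show ((z.val : ℕ) : ZMod n) + 1 = ((z.val + 1 : ℕ) : ZMod n) from by push_cast; ring]
      rw [hφnat]
    have hφpred : ∀ z : ZMod n, φ (z - 1) = f (z.val + n - 1) := by
      intro z
      conv_lhs => rw [← hcastval z]
      rw [show ((z.val : ℕ) : ZMod n) - 1 = ((z.val + n - 1 : ℕ) : ZMod n) from by
        rw [Nat.cast_sub (by omega : 1 ≤ z.val + n), Nat.cast_add, ZMod.natCast_self]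
        push_cast
        ring]
      rw [hφnat]
    have hφinj : Function.Injective φ := by
      intro z1 z2 h
      have h1 : z1.val = z2.val := by
        by_contra hne
        rcases Nat.lt_or_ge z1.val z2.val with hlt | hge
        · exact hinj _ _ hlt (ZMod.val_lt z2) h
        · exact hinj _ _ (by omega) (ZMod.val_lt z1) h.symm
      rw [← hcastval z1, ← hcastval z2, h1]
    have hφsurj : ∀ x, ∃ z, φ z = x := by
      intro x
      obtain ⟨k, hkn, hk⟩ := hsurj x
      exact ⟨(k : ZMod n), by rw [hφnat k, hk]⟩
    have hφnb : ∀ z : ZMod n, G.neighborFinset (φ z) = {φ (z + 1), φ (z - 1)} := by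
      intro z
      have h1 := hnbf (z.val + n - 1)
      rw [show z.val + n - 1 + 1 = z.val + n from by omega] at h1
      rw [hper z.val] at h1
      rw [show z.val + n - 1 + 2 = (z.val + 1) + n from by omega, hper] at h1
      rw [hφsucc z, hφpred z]
      show G.neighborFinset (f z.val) = _
      rw [h1, Finset.pair_comm]
    have hφadj : ∀ z y, G.Adj (φ z) y ↔ (y = φ (z+1) ∨ y = φ (z-1)) := by
      intro z y
      constructor
      · intro h
        have h1 : y ∈ G.neighborFinset (φ z) := (SimpleGraph.mem_neighborFinset _ _ _).mpr h
        rw [hφnb z] at h1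
        rcases Finset.mem_insert.mp h1 with h2 | h2
        · exact Or.inl h2
        · exact Or.inr (Finset.mem_singleton.mp h2)
      · intro h
        have h1 : y ∈ G.neighborFinset (φ z) := by
          rw [hφnb z]
          rcases h with rfl | rfl
          · simp
          · simp
        rwa [SimpleGraph.mem_neighborFinset] at h1
    set E : ZMod n → Sym2 V := fun z => s(φ z, φ (z + 1)) with hE
    have h10 : (1 : ZMod n) ≠ 0 := by
      intro h
      have h1 : ((1:ℕ) : ZMod n).val = 1 := ZMod.val_cast_of_lt (by omega)
      rw [Nat.cast_one, h] at h1
      simp at h1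
    have h20 : (2 : ZMod n) ≠ 0 := by
      intro h
      have h1 : ((2:ℕ) : ZMod n).val = 2 := ZMod.val_cast_of_lt (by omega)
      rw [Nat.cast_ofNat, h] at h1
      simp at h1
    have hEinj : Function.Injective E := by
      intro z1 z2 h
      simp only [hE] at h
      rw [Sym2.eq_iff] at h
      rcases h with ⟨h1, _⟩ | ⟨h1, h2⟩
      · exact hφinj h1
      · exfalso
        have e1 := hφinj h1
        have e2 := hφinj h2
        exact h20 (by linear_combination e2 - e1)
    have hEedge : ∀ z, E z ∈ G.edgeSet := by
      intro z
      show G.Adj (φ z) (φ (z+1))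
      rw [hφadj]
      exact Or.inl rfl
    have hedgesE : ∀ e ∈ G.edgeSet, ∃ z, e = E z := by
      intro e he
      obtain ⟨a, b, hab, rfl⟩ := hnedge e he
      have hadj : G.Adj a b := he
      obtain ⟨z, rfl⟩ := hφsurj a
      rcases (hφadj z b).mp hadj with rfl | rfl
      · exact ⟨z, rfl⟩
      · refine ⟨z - 1, ?_⟩
        simp only [hE]
        rw [sub_add_cancel]
        exact Sym2.eq_swap
    have hinc : ∀ z, G.incidenceSet (φ z) = {E z, E (z - 1)} := by
      intro z
      ext e
      constructor
      · rintro ⟨he, hze⟩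
        obtain ⟨z', rfl⟩ := hedgesE e he
        rcases Sym2.mem_iff.mp hze with h1 | h1
        · left
          exact congrArg E (hφinj h1).symm
        · right
          rw [Set.mem_singleton_iff]
          have h2 : z = z' + 1 := hφinj h1
          rw [show z' = z - 1 from by linear_combination -h2]
      · intro h
        rcases h with h | h
        · rw [h]
          exact ⟨hEedge z, Sym2.mem_mk_left _ _⟩
        · rw [Set.mem_singleton_iff] at h
          rw [h]
          refine ⟨hEedge (z-1), ?_⟩
          show φ z ∈ s(φ (z-1), φ (z-1+1))
          rw [sub_add_cancel]
          exact Sym2.mem_mk_right _ _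
    set Sl : ZMod n → Finset ℝ := fun z => (Lv (φ z)).image (· + w (φ z)) with hSl
    set Tl : ZMod n → Finset ℝ := fun z => Le (E z) with hTl
    have hSlc : ∀ z, (Sl z).card = 2 := by
      intro z
      simp only [hSl]
      rw [Finset.card_image_of_injective _ (add_left_injective _), hLv]
    have hTlc : ∀ z, (Tl z).card = 2 := fun z => hLe _ (hEedge z)
    obtain ⟨rz, hrz⟩ := hφsurj r
    obtain ⟨α, t, hα, ht, hcons, havoid⟩ := cycle_core hn3 Sl Tl hSlc hTlc rz v₀
    set fe : Sym2 V → ℝ := fun e => if h : ∃ z, e = E z then t h.choose else 0 with hfe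
    have hfeE : ∀ z, fe (E z) = t z := by
      intro z
      have hex : ∃ z', E z = E z' := ⟨z, rfl⟩
      simp only [hfe]
      rw [dif_pos hex]
      exact congrArg t (hEinj hex.choose_spec).symm
    choose ψ hψspec using fun x => hφsurj x
    have hψφ : ∀ z, ψ (φ z) = z := fun z => hφinj (hψspec (φ z))
    set fv : V → ℝ := fun x => α (ψ x) - w x with hfv
    have hfvmem : ∀ x, fv x ∈ Lv x := by
      intro x
      have h1 := hα (ψ x)
      simp only [hSl] at h1
      obtain ⟨a, ha, hae⟩ := Finset.mem_image.mp h1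
      rw [hψspec x] at ha hae
      simp only [hfv]
      rw [← hae]
      simpa using ha
    have hfemem : ∀ e ∈ G.edgeSet, fe e ∈ Le e := by
      intro e he
      obtain ⟨z, rfl⟩ := hedgesE e he
      rw [hfeE z]
      exact ht z
    have hEne : ∀ z : ZMod n, E z ≠ E (z - 1) := by
      intro z h
      have h1 := hEinj h
      exact h10 (by linear_combination h1)
    have hSφ : ∀ z : ZMod n,
        fv (φ z) + w (φ z) + ∑ᶠ e ∈ G.incidenceSet (φ z), fe e
          = α z + t z + t (z - 1) := by
      intro z
      rw [hinc z, finsum_mem_pair (hEne z), hfeE, hfeE]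
      simp only [hfv]
      rw [hψφ z]
      ring
    refine ⟨fv, fe, hfvmem, hfemem, ?_, ?_⟩
    · intro a b hab
      obtain ⟨z, rfl⟩ := hφsurj a
      rcases (hφadj z b).mp hab with rfl | rfl
      · rw [hSφ z, hSφ (z + 1)]
        have h1 := hcons z
        rw [show z + 1 - 1 = z from by ring]
        intro heq
        apply h1
        linarith
      · rw [hSφ z, hSφ (z - 1)]
        have h1 := hcons (z - 1)
        rw [show z - 1 + 1 = z from by ring] at h1
        intro heq
        apply h1
        linarith
    · rw [← hrz, hSφ rz]
      intro heq
      apply havoid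
      linarith

end Main

end TWAux

theorem stmt_17 {V : Type*} [Fintype V] (G : SimpleGraph V) (hconn : G.Connected)
    (huni : G.edgeSet.ncard = Fintype.card V) :
    TWChoosable G 2 2 := by
  intro Lv Le hLv hLe
  classical
  obtain ⟨r⟩ := hconn.nonempty
  obtain ⟨fv, fe, h1, h2, h3, -⟩ :=
    TWAux.mainP (Fintype.card V) V G rfl hconn huni Lv Le hLv hLe (fun _ => 0) r 0
  refine ⟨fv, fe, h1, h2, ?_⟩
  intro a b hab
  have h4 := h3 a b hab
  simpa using h4
end

section
/- Let A be an n×m matrix over a field and L an n×n matrix each of whose columns is a linear combination of columns of A; suppose the j-th column of A appears with nonzero coefficient in n_j of these linear combinations. If per(L) ≠ 0, then there is a function η: {1,...,m} → ℕ with η(j) ≤ n_j for all j and Σ_j η(j) = n, such that the n×n matrix A(η) formed by taking η(j) copies of the j-th column of A has per(A(η)) ≠ 0. -/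
/-- The permanent of a square matrix. -/
def perm {n : Type*} [Fintype n] [DecidableEq n] {R : Type*} [CommRing R]
    (M : Matrix n n R) : R :=
  ∑ σ : Equiv.Perm n, ∏ i, M i (σ i)

/-- If every column of the `n × n` matrix `L` is a linear combination of the columns of
`A` (column `k` of `L` is `∑ j, c k j • (column j of A)`) and `per L ≠ 0`, then there is
a selection `ρ` of columns of `A` (an `n × n` matrix `A.submatrix id ρ` whose columns are
columns of `A`, the `j`-th column being used `η j := #{k | ρ k = j}` times) such that each
column `j` is used at most `n_j := #{k | c k j ≠ 0}` times and the resulting matrix has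
nonzero permanent; necessarily `∑ j, η j = n`. -/
theorem stmt_19 {n m : ℕ} {F : Type*} [Field F] [DecidableEq F]
    (A : Matrix (Fin n) (Fin m) F) (L : Matrix (Fin n) (Fin n) F)
    (c : Fin n → Fin m → F)
    (hL : ∀ i k, L i k = ∑ j, c k j * A i j)
    (hper : perm L ≠ 0) :
    ∃ ρ : Fin n → Fin m,
      (∀ j, (Finset.univ.filter fun k => ρ k = j).card ≤
          (Finset.univ.filter fun k => c k j ≠ 0).card) ∧
      (∑ j, (Finset.univ.filter fun k => ρ k = j).card = n) ∧
      perm (A.submatrix id ρ) ≠ 0 := by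
  classical
  have key : perm L = ∑ ρ : Fin n → Fin m, (∏ k, c k (ρ k)) * perm (A.submatrix id ρ) := by
    unfold perm
    have lhs : ∀ σ : Equiv.Perm (Fin n),
        (∏ i, L i (σ i)) = ∑ g : Fin n → Fin m, ∏ i, c (σ i) (g i) * A i (g i) := by
      intro σ
      simp_rw [hL]
      rw [Finset.prod_univ_sum]
      rw [Fintype.piFinset_univ]
    simp_rw [lhs, Matrix.submatrix_apply, id_eq, Finset.mul_sum]
    conv_rhs => rw [Finset.sum_comm]
    refine Finset.sum_congr rfl fun σ _ => ?_
    rw [← Equiv.sum_comp (Equiv.arrowCongr σ (Equiv.refl (Fin m)))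
      (fun ρ => (∏ k, c k (ρ k)) * ∏ i, A i (ρ (σ i)))]
    refine Finset.sum_congr rfl fun g _ => ?_
    have h1 : (∏ k, c k ((Equiv.arrowCongr σ (Equiv.refl (Fin m)) g) k))
        = ∏ i, c (σ i) (g i) := by
      rw [← Equiv.prod_comp σ (fun k => c k ((Equiv.arrowCongr σ (Equiv.refl (Fin m)) g) k))]
      simp
    have h2 : (∏ i, A i ((Equiv.arrowCongr σ (Equiv.refl (Fin m)) g) (σ i)))
        = ∏ i, A i (g i) := by simp
    rw [h1, h2, ← Finset.prod_mul_distrib]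
  rw [key] at hper
  obtain ⟨ρ, -, hρ⟩ := Finset.exists_ne_zero_of_sum_ne_zero hper
  have hc : ∀ k, c k (ρ k) ≠ 0 := by
    have := left_ne_zero_of_mul hρ
    rw [Finset.prod_ne_zero_iff] at this
    exact fun k => this k (Finset.mem_univ k)
  refine ⟨ρ, fun j => ?_, ?_, right_ne_zero_of_mul hρ⟩
  · apply Finset.card_le_card
    intro k hk
    simp only [Finset.mem_filter, Finset.mem_univ, true_and] at hk ⊢
    rw [← hk]; exact hc k
  · have := Finset.card_eq_sum_card_fiberwise
      (f := ρ) (s := Finset.univ) (t := Finset.univ) (fun x _ => Finset.mem_univ (ρ x))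
    simpa using this.symm
end
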